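/- arXiv:0710.2098 — 9 statements merged into one kernel-verified Lean document; each statement's English description precedes it below -/
import Mathlib

section
/- Projective law: Let G be a projective geometry and let S and T be non-empty subspaces of G. Then the set ⋃{a⋆b | a ∈ S, b ∈ T} is a subspace of G, and consequently it equals the projective closure cl(S ∪ T). -/
structure ProjGeom (G : Type*) where
  l : G → G → G → Prop
  g1 : ∀ a b, l a b a
  g2 : ∀ a b p q, l a p q → l b p q → p ≠ q → l a b p
  g3 : ∀ a b c d p, l p a b → l p c d → ∃ q, l q a c ∧ l q b d

namespace ProjGeom

variable {G : Type*} (PG : ProjGeom G)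

open scoped Classical in
/-- The projective line through `a` and `b`, with the convention `a ⋆ a = {a}`. -/
noncomputable def star (a b : G) : Set G :=
  if a = b then {a} else {x | PG.l x a b}

/-- A subspace of a projective geometry. -/
def IsSubspace (S : Set G) : Prop :=
  ∀ a ∈ S, ∀ b ∈ S, PG.star a b ⊆ S

/-- The projective closure of a subset. -/
def cl (A : Set G) : Set G :=
  ⋂₀ {S : Set G | PG.IsSubspace S ∧ A ⊆ S}

end ProjGeom
section Aux

variable {G : Type*} (PG : ProjGeom G)

lemma lsym {z x y : G} (h : PG.l z x y) : PG.l z y x := by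
  by_cases hxy : x = y
  · subst hxy; exact h
  · exact PG.g2 z y x y h (PG.g1 y x) hxy

lemma lrefl1 (a b : G) : PG.l a a b := by
  by_cases hab : a = b
  · subst hab; exact PG.g1 a a
  · exact PG.g2 a a b a (PG.g1 a b) (PG.g1 a b) (fun h => hab h.symm)

lemma lrefl2 (a b : G) : PG.l a b b := by
  by_cases hab : a = b
  · subst hab; exact PG.g1 a a
  · exact PG.g2 a b b a (PG.g1 a b) (lrefl1 PG b a) (fun h => hab h.symm)

lemma lexchA {z x y : G} (h : PG.l z x y) (hxy : x ≠ y) : PG.l x z y :=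
  PG.g2 x z y x (PG.g1 x y) (lsym PG h) (fun hh => hxy hh.symm)

lemma lexchB {z x y : G} (h : PG.l z x y) (hxy : x ≠ y) : PG.l y z x :=
  lexchA PG (lsym PG h) (fun hh => hxy hh.symm)

lemma lemA {r v q p : G} (h1 : PG.l r v q) (h2 : PG.l v p q) (hvq : v ≠ q)
    (hpq : p ≠ q) : PG.l r p q := by
  have hpvq : PG.l p v q := lexchA PG h2 hpq
  exact PG.g2 r p q v (lsym PG h1) (lsym PG hpvq) (fun h => hvq h.symm)

lemma lineSub {u v p q w : G} (hu : PG.l u p q) (hv : PG.l v p q) (huv : u ≠ v)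
    (hw : PG.l w u v) (hpq : p ≠ q) : PG.l w p q := by
  by_cases hvq : v = q
  · subst hvq; exact lemA PG hw hu huv hpq
  · have huvq : PG.l u v q :=
      PG.g2 u v q p (lsym PG hu) (lsym PG hv) (fun h => hpq h.symm)
    have h1 : PG.l w q v := lemA PG hw (lsym PG huvq) huv (fun h => hvq h.symm)
    exact lemA PG (lsym PG h1) hv hvq hpq

lemma star_mem_of_ne {a b z : G} (hab : a ≠ b) (h : PG.l z a b) : z ∈ PG.star a b := by
  rw [ProjGeom.star, if_neg hab]; exact h

lemma l_of_star_mem {a b z : G} (hab : a ≠ b) (h : z ∈ PG.star a b) : PG.l z a b := by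
  rwa [ProjGeom.star, if_neg hab] at h

lemma star_self_mem_left (a b : G) : a ∈ PG.star a b := by
  by_cases hab : a = b
  · rw [ProjGeom.star, if_pos hab]; rfl
  · exact star_mem_of_ne PG hab (lrefl1 PG a b)

lemma star_self_mem_right (a b : G) : b ∈ PG.star a b := by
  by_cases hab : a = b
  · rw [ProjGeom.star, if_pos hab]; exact hab.symm
  · exact star_mem_of_ne PG hab (PG.g1 b a)

end Aux

section Main

variable {G : Type*} (PG : ProjGeom G) (S T : Set G)

local notation "U" => ⋃ a ∈ S, ⋃ b ∈ T, PG.star a b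

lemma memU {a b z : G} (ha : a ∈ S) (hb : b ∈ T) (h : z ∈ PG.star a b) : z ∈ U := by
  simp only [Set.mem_iUnion]
  exact ⟨a, ha, b, hb, h⟩

lemma memN {a b z : G} (ha : a ∈ S) (hb : b ∈ T) (hab : a ≠ b) (h : PG.l z a b) :
    z ∈ U :=
  memU PG S T ha hb (star_mem_of_ne PG hab h)

lemma memS {z : G} (hTne : T.Nonempty) (hz : z ∈ S) : z ∈ U := by
  obtain ⟨t, ht⟩ := hTne
  exact memU PG S T hz ht (star_self_mem_left PG z t)

lemma memT {z : G} (hSne : S.Nonempty) (hz : z ∈ T) : z ∈ U := by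
  obtain ⟨s, hs⟩ := hSne
  exact memU PG S T hs hz (star_self_mem_right PG s z)

lemma caseXS (hS : PG.IsSubspace S) (hT : PG.IsSubspace T)
    (hSne : S.Nonempty) (hTne : T.Nonempty)
    {x c d y z : G} (hxS : x ∈ S) (hc : c ∈ S) (hd : d ∈ T) (hcd : c ≠ d)
    (hy : PG.l y c d) (hxy : x ≠ y) (hz : PG.l z x y) : z ∈ U := by
  by_cases hzx : z = x
  · exact memS PG S T hTne (hzx ▸ hxS)
  by_cases hzy : z = y
  · exact memN PG S T hc hd hcd (hzy ▸ hy)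
  have hyxz : PG.l y x z := lsym PG (lexchB PG hz hxy)
  obtain ⟨q, hq1, hq2⟩ := PG.g3 x z c d y hyxz hy
  by_cases hxc : x = c
  · have hyxd : PG.l y x d := by rw [hxc]; exact hy
    have hdx : d ≠ x := fun h => hcd (hxc.symm.trans h.symm)
    have hzdx : PG.l z d x :=
      lemA PG (lsym PG hz) (lsym PG hyxd) (fun h => hxy h.symm) hdx
    exact memN PG S T hxS hd (fun h => hdx h.symm) (lsym PG hzdx)
  · have hqS : q ∈ S := hS x hxS c hc (star_mem_of_ne PG hxc hq1)
    by_cases hqd : q = d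
    · have hdS : d ∈ S := hqd ▸ hqS
      have hyS : y ∈ S := hS c hc d hdS (star_mem_of_ne PG hcd hy)
      have hzS : z ∈ S := hS x hxS y hyS (star_mem_of_ne PG hxy hz)
      exact memS PG S T hTne hzS
    · by_cases hzd : z = d
      · exact memT PG S T hSne (hzd ▸ hd)
      · exact memN PG S T hqS hd hqd (lexchA PG hq2 hzd)

lemma caseXT (hS : PG.IsSubspace S) (hT : PG.IsSubspace T)
    (hSne : S.Nonempty) (hTne : T.Nonempty)
    {x c d y z : G} (hxT : x ∈ T) (hc : c ∈ S) (hd : d ∈ T) (hcd : c ≠ d)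
    (hy : PG.l y c d) (hxy : x ≠ y) (hz : PG.l z x y) : z ∈ U := by
  by_cases hzx : z = x
  · exact memT PG S T hSne (hzx ▸ hxT)
  by_cases hzy : z = y
  · exact memN PG S T hc hd hcd (hzy ▸ hy)
  have hyxz : PG.l y x z := lsym PG (lexchB PG hz hxy)
  obtain ⟨q, hq1, hq2⟩ := PG.g3 x z d c y hyxz (lsym PG hy)
  by_cases hxd : x = d
  · have hycx : PG.l y c x := by rw [hxd]; exact hy
    have hcx : c ≠ x := fun h => hcd (h.trans hxd)
    have hzcx : PG.l z c x :=
      lemA PG (lsym PG hz) hycx (fun h => hxy h.symm) hcx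
    exact memN PG S T hc hxT hcx hzcx
  · have hqT : q ∈ T := hT x hxT d hd (star_mem_of_ne PG hxd hq1)
    by_cases hqc : q = c
    · have hcT : c ∈ T := hqc ▸ hqT
      have hyT : y ∈ T := hT c hcT d hd (star_mem_of_ne PG hcd hy)
      have hzT : z ∈ T := hT x hxT y hyT (star_mem_of_ne PG hxy hz)
      exact memT PG S T hSne hzT
    · by_cases hzc : z = c
      · exact memS PG S T hTne (hzc ▸ hc)
      · exact memN PG S T hc hqT (fun h => hqc h.symm) (lsym PG (lexchA PG hq2 hzc))


lemma caseNN (hS : PG.IsSubspace S) (hT : PG.IsSubspace T)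
    (hSne : S.Nonempty) (hTne : T.Nonempty)
    {a b c d x y z : G}
    (ha : a ∈ S) (hb : b ∈ T) (hab : a ≠ b) (hx : PG.l x a b)
    (hc : c ∈ S) (hd : d ∈ T) (hcd : c ≠ d) (hy : PG.l y c d)
    (hxy : x ≠ y) (hz : PG.l z x y) : z ∈ U := by
  by_cases hza : z = a
  · exact memS PG S T hTne (hza ▸ ha)
  by_cases hzb : z = b
  · exact memT PG S T hSne (hzb ▸ hb)
  by_cases hzx : z = x
  · exact memN PG S T ha hb hab (hzx ▸ hx)
  by_cases hzy : z = y
  · exact memN PG S T hc hd hcd (hzy ▸ hy)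
  by_cases hxc : x = c
  · exact caseXS PG S T hS hT hSne hTne (hxc ▸ hc) hc hd hcd hy hxy hz
  by_cases hxd : x = d
  · exact caseXT PG S T hS hT hSne hTne (hxd ▸ hd) hc hd hcd hy hxy hz
  by_cases hya : y = a
  · exact caseXS PG S T hS hT hSne hTne (hya ▸ ha) ha hb hab hx
      (fun h => hxy h.symm) (lsym PG hz)
  by_cases hyb : y = b
  · exact caseXT PG S T hS hT hSne hTne (hyb ▸ hb) ha hb hab hx
      (fun h => hxy h.symm) (lsym PG hz)
  -- main chain
  have hxzy : PG.l x z y := lexchA PG hz hxy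
  obtain ⟨w, hw1, hw2⟩ := PG.g3 z y a b x hxzy hx
  -- hw1 : l w z a, hw2 : l w y b
  have hzwa : PG.l z w a := lexchA PG hw1 hza
  by_cases hwa : w = a
  · -- a lies on line (y,b); everything collapses to line (y,b)
    have hayb : PG.l a y b := hwa ▸ hw2
    have hbyb : PG.l b y b := PG.g1 b y
    have hxyb : PG.l x y b := lineSub PG hayb hbyb hab hx hyb
    have hyyb : PG.l y y b := lrefl1 PG y b
    have hzyb : PG.l z y b := lineSub PG hxyb hyyb hxy hz hyb
    exact caseXT PG S T hS hT hSne hTne hb hc hd hcd hy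
      (fun h => hyb h.symm) (lsym PG hzyb)
  by_cases hwb : w = b
  · exact memN PG S T ha hb hab (lsym PG (hwb ▸ hzwa))
  by_cases hwy : w = y
  · exact caseXS PG S T hS hT hSne hTne ha hc hd hcd hy (fun h => hya h.symm)
      (lsym PG (hwy ▸ hzwa))
  have hywb : PG.l y w b := lexchA PG hw2 hyb
  obtain ⟨v, hv1, hv2⟩ := PG.g3 w b c d y hywb hy
  -- hv1 : l v w c, hv2 : l v b d
  by_cases hbd : b = d
  · -- y lies on line (c,b)
    have hycb : PG.l y c b := by rw [hbd]; exact hy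
    have hbcb : PG.l b c b := PG.g1 b c
    have hwcb : PG.l w c b := lineSub PG hycb hbcb hyb hw2 (hbd ▸ hcd)
    exact caseXS PG S T hS hT hSne hTne ha hc hb (hbd ▸ hcd) hwcb
      (fun h => hwa h.symm) (lsym PG hzwa)
  · have hvT : v ∈ T := hT b hb d hd (star_mem_of_ne PG hbd hv2)
    by_cases hwc : w = c
    · have hzS : z ∈ S := hS w (hwc ▸ hc) a ha (star_mem_of_ne PG hwa hzwa)
      exact memS PG S T hTne hzS
    by_cases hvc : v = c
    · have hcT : c ∈ T := hvc ▸ hvT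
      have hyT : y ∈ T := hT c hcT d hd (star_mem_of_ne PG hcd hy)
      exact caseXT PG S T hS hT hSne hTne hyT ha hb hab hx
        (fun h => hxy h.symm) (lsym PG hz)
    · have hwcv : PG.l w c v := lsym PG (lexchA PG hv1 hwc)
      exact caseXS PG S T hS hT hSne hTne ha hc hvT (fun h => hvc h.symm) hwcv
        (fun h => hwa h.symm) (lsym PG hzwa)

lemma masterCase (hS : PG.IsSubspace S) (hT : PG.IsSubspace T)
    (hSne : S.Nonempty) (hTne : T.Nonempty)
    {a b c d x y z : G}
    (ha : a ∈ S) (hb : b ∈ T) (hc : c ∈ S) (hd : d ∈ T)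
    (hx : x ∈ PG.star a b) (hy : y ∈ PG.star c d) (hz : z ∈ PG.star x y) :
    z ∈ U := by
  by_cases hxy : x = y
  · rw [ProjGeom.star, if_pos hxy] at hz
    rw [show z = x from hz]
    exact memU PG S T ha hb hx
  have hzxy : PG.l z x y := l_of_star_mem PG hxy hz
  by_cases hab : a = b
  · rw [ProjGeom.star, if_pos hab] at hx
    have hxa : x = a := hx
    have hxS : x ∈ S := hxa ▸ ha
    by_cases hcd : c = d
    · rw [ProjGeom.star, if_pos hcd] at hy
      have hyS : y ∈ S := (show y = c from hy) ▸ hc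
      exact memS PG S T hTne (hS x hxS y hyS hz)
    · exact caseXS PG S T hS hT hSne hTne hxS hc hd hcd
        (l_of_star_mem PG hcd hy) hxy hzxy
  · have hxab : PG.l x a b := l_of_star_mem PG hab hx
    by_cases hcd : c = d
    · rw [ProjGeom.star, if_pos hcd] at hy
      have hyS : y ∈ S := (show y = c from hy) ▸ hc
      exact caseXS PG S T hS hT hSne hTne hyS ha hb hab hxab
        (fun h => hxy h.symm) (lsym PG hzxy)
    · exact caseNN PG S T hS hT hSne hTne ha hb hab hxab hc hd hcd
        (l_of_star_mem PG hcd hy) hxy hzxy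

end Main

/-- **Projective law.** For non-empty subspaces `S` and `T` of a projective geometry `G`,
the union of all lines `a ⋆ b` with `a ∈ S`, `b ∈ T` is a subspace of `G`, and it equals
the projective closure `cl (S ∪ T)`. -/
theorem projective_law {G : Type*} (PG : ProjGeom G) (S T : Set G)
    (hS : PG.IsSubspace S) (hT : PG.IsSubspace T)
    (hSne : S.Nonempty) (hTne : T.Nonempty) :
    PG.IsSubspace (⋃ a ∈ S, ⋃ b ∈ T, PG.star a b) ∧
      (⋃ a ∈ S, ⋃ b ∈ T, PG.star a b) = PG.cl (S ∪ T) := by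
  have hsub : PG.IsSubspace (⋃ a ∈ S, ⋃ b ∈ T, PG.star a b) := by
    intro x hx y hy z hz
    simp only [Set.mem_iUnion] at hx hy
    obtain ⟨a, ha, b, hb, hxab⟩ := hx
    obtain ⟨c, hc, d, hd, hycd⟩ := hy
    exact masterCase PG S T hS hT hSne hTne ha hb hc hd hxab hycd hz
  refine ⟨hsub, ?_⟩
  apply subset_antisymm
  · intro z hz
    intro V hV
    obtain ⟨hVsub, hVST⟩ := hV
    simp only [Set.mem_iUnion] at hz
    obtain ⟨a, ha, b, hb, hzab⟩ := hz
    exact hVsub a (hVST (Or.inl ha)) b (hVST (Or.inr hb)) hzab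
  · apply Set.sInter_subset_of_mem
    refine ⟨hsub, ?_⟩
    intro z hz
    rcases hz with hz | hz
    · exact memS PG S T hTne hz
    · exact memT PG S T hSne hz
end

section
/- Let G be a projective geometry. The lattice of subspaces of G, ordered by inclusion, is modular: for all subspaces S, T, U of G with S ⊆ T, one has cl(S ∪ (U ∩ T)) = cl(S ∪ U) ∩ T. -/
section Aux

variable {G : Type*} (PG : ProjGeom G)

namespace ProjGeom

variable {x y z a b c d : G}

lemma swap23 (h : PG.l x a b) : PG.l x b a := by
  by_cases hab : a = b
  · subst hab; exact h
  · exact PG.g2 x b a b h (PG.g1 b a) hab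

lemma swap12 (hab : a ≠ b) (h : PG.l x a b) : PG.l a x b :=
  PG.g2 a x b a (PG.g1 a b) (PG.swap23 h) (Ne.symm hab)

lemma swap13 (hab : a ≠ b) (h : PG.l x a b) : PG.l b a x := by
  have h1 := PG.swap23 h
  have h2 := PG.swap12 (Ne.symm hab) h1
  exact PG.swap23 h2

lemma l_self (hba : b ≠ a) : PG.l a a b :=
  PG.g2 a a b a (PG.g1 a b) (PG.g1 a b) hba

lemma mem_star_left (a b : G) : a ∈ PG.star a b := by
  unfold star
  split
  · exact rfl
  · exact PG.l_self (Ne.symm (by assumption))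

lemma mem_star_right (a b : G) : b ∈ PG.star a b := by
  unfold star
  split
  · exact (by assumption : a = b).symm
  · exact PG.g1 b a

lemma mem_star_of_l (hab : a ≠ b) (h : PG.l x a b) : x ∈ PG.star a b := by
  unfold star; rw [if_neg hab]; exact h

lemma l_of_mem_star (hab : a ≠ b) (h : x ∈ PG.star a b) : PG.l x a b := by
  unfold star at h; rw [if_neg hab] at h; exact h

lemma star_comm (a b : G) : PG.star a b = PG.star b a := by
  by_cases hab : a = b
  · subst hab; rfl
  · ext w
    constructor
    · intro hw; exact PG.mem_star_of_l (Ne.symm hab) (PG.swap23 (PG.l_of_mem_star hab hw))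
    · intro hw; exact PG.mem_star_of_l hab (PG.swap23 (PG.l_of_mem_star (Ne.symm hab) hw))

lemma mem_star_comm (h : x ∈ PG.star a b) : x ∈ PG.star b a := by
  rw [← PG.star_comm]; exact h

lemma star_subset_of_mem (h : x ∈ PG.star a b) (hxa : x ≠ a) :
    PG.star a b ⊆ PG.star a x := by
  by_cases hab : a = b
  · subst hab
    exact absurd (Set.eq_of_mem_singleton (by simpa [star] using h)) hxa
  · intro w hw
    have hl := PG.g2 w x a b (PG.l_of_mem_star hab hw) (PG.l_of_mem_star hab h) hab
    exact PG.mem_star_of_l (Ne.symm hxa) (PG.swap23 hl)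

lemma exchange (h : x ∈ PG.star a b) (hxa : x ≠ a) : b ∈ PG.star a x := by
  by_cases hab : a = b
  · subst hab
    exact absurd (Set.eq_of_mem_singleton (by simpa [star] using h)) hxa
  · by_cases hxb : x = b
    · subst hxb; exact PG.mem_star_right a x
    · exact PG.mem_star_of_l (Ne.symm hxa) (PG.swap13 hab (PG.l_of_mem_star hab h))

lemma star_eq_of_mem (h : x ∈ PG.star a b) (hxa : x ≠ a) :
    PG.star a b = PG.star a x := by
  refine subset_antisymm (PG.star_subset_of_mem h hxa) ?_
  have hb : b ∈ PG.star a x := PG.exchange h hxa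
  have hba : b ≠ a := by rintro rfl; exact hxa (Set.eq_of_mem_singleton (by simpa [star] using h))
  exact PG.star_subset_of_mem hb hba

lemma star_isSubspace (x y : G) : PG.IsSubspace (PG.star x y) := by
  intro a ha b hb
  by_cases hxy : x = y
  · subst hxy
    simp only [star, if_pos rfl, Set.mem_singleton_iff] at ha hb
    subst ha; subst hb
    simp [star]
  · by_cases hab : a = b
    · subst hab
      intro w hw
      simp only [star, if_pos rfl, Set.mem_singleton_iff] at hw
      subst hw; exact ha
    · by_cases hax : a = x
      · subst hax
        have hbne : b ≠ a := Ne.symm hab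
        rw [← PG.star_eq_of_mem hb hbne]
      · have h1 : PG.star x y = PG.star x a := PG.star_eq_of_mem ha hax
        have hb' : b ∈ PG.star a x := PG.mem_star_comm (h1 ▸ hb)
        have h2 : PG.star a x = PG.star a b := PG.star_eq_of_mem hb' (Ne.symm hab)
        rw [h1, ← h2, PG.star_comm a x]

/-- Key "triangle" lemma derived from G3. -/
lemma key (hz : z ∈ PG.star x y) (hy : y ∈ PG.star c d) :
    ∃ q, q ∈ PG.star x c ∧ z ∈ PG.star q d := by
  by_cases hzx : z = x
  · exact ⟨x, PG.mem_star_left x c, hzx ▸ PG.mem_star_left x d⟩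
  by_cases hzy : z = y
  · exact ⟨c, PG.mem_star_right x c, hzy ▸ hy⟩
  by_cases hxy : x = y
  · subst hxy
    exact absurd (Set.eq_of_mem_singleton (by simpa [star] using hz)) hzx
  have hlz : PG.l z x y := PG.l_of_mem_star hxy hz
  by_cases hcd : c = d
  · subst hcd
    have : y = c := Set.eq_of_mem_singleton (by simpa [star] using hy)
    subst this
    exact ⟨z, hz, PG.mem_star_left z y⟩
  by_cases hyc : y = c
  · subst hyc
    exact ⟨z, hz, PG.mem_star_left z d⟩
  by_cases hyd : y = d
  · subst hyd
    exact ⟨x, PG.mem_star_left x c, hz⟩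
  have hly : PG.l y c d := PG.l_of_mem_star hcd hy
  by_cases hxc : x = c
  · subst hxc
    have h1 : PG.star x d = PG.star x y := PG.star_eq_of_mem hy (by exact fun h => hyc h)
    exact ⟨x, PG.mem_star_left x x, h1 ▸ hz⟩
  · have hlyxz : PG.l y x z := PG.swap13 hxy hlz
    obtain ⟨q, hq1, hq2⟩ := PG.g3 x z c d y hlyxz hly
    have hqmem : q ∈ PG.star x c := PG.mem_star_of_l hxc hq1
    by_cases hqz : q = z
    · exact ⟨q, hqmem, hqz ▸ PG.mem_star_left q d⟩
    by_cases hqd : q = d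
    · subst hqd
      have hdmem : q ∈ PG.star x c := hqmem
      have hsub1 : PG.star c q ⊆ PG.star x c :=
        PG.star_isSubspace x c c (PG.mem_star_right x c) q hdmem
      have hymem : y ∈ PG.star x c := hsub1 hy
      have hsub2 : PG.star x y ⊆ PG.star x c :=
        PG.star_isSubspace x c x (PG.mem_star_left x c) y hymem
      exact ⟨z, hsub2 hz, PG.mem_star_left z q⟩
    by_cases hzd : z = d
    · exact ⟨q, hqmem, hzd ▸ PG.mem_star_right q d⟩
    · exact ⟨q, hqmem, PG.mem_star_of_l hqd (PG.swap12 hzd hq2)⟩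

lemma subset_cl (A : Set G) : A ⊆ PG.cl A := by
  intro x hx
  exact fun S hS => hS.2 hx

lemma cl_isSubspace (A : Set G) : PG.IsSubspace (PG.cl A) := by
  intro a ha b hb w hw
  intro S hS
  exact hS.1 a (ha S hS) b (hb S hS) hw

lemma cl_subset {A S : Set G} (hS : PG.IsSubspace S) (h : A ⊆ S) : PG.cl A ⊆ S :=
  Set.sInter_subset_of_mem ⟨hS, h⟩

lemma cl_of_subspace {S : Set G} (hS : PG.IsSubspace S) : PG.cl S = S :=
  subset_antisymm (PG.cl_subset hS subset_rfl) (PG.subset_cl S)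

lemma cl_mono {A B : Set G} (h : A ⊆ B) : PG.cl A ⊆ PG.cl B :=
  PG.cl_subset (PG.cl_isSubspace B) (h.trans (PG.subset_cl B))

/-- The join of two subspaces is the union of the lines connecting them. -/
lemma join_isSubspace {S U : Set G} (hS : PG.IsSubspace S) (hU : PG.IsSubspace U) :
    PG.IsSubspace {x | ∃ a ∈ S, ∃ b ∈ U, x ∈ PG.star a b} := by
  intro u hu v hv z hz
  obtain ⟨a, haS, b, hbU, hu⟩ := hu
  obtain ⟨c, hcS, d, hdU, hv⟩ := hv
  obtain ⟨q, hq1, hq2⟩ := PG.key hz hv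
  obtain ⟨r, hr1, hr2⟩ := PG.key (PG.mem_star_comm hq1) hu
  obtain ⟨s, hs1, hs2⟩ := PG.key (PG.mem_star_comm hq2) (PG.mem_star_comm hr2)
  exact ⟨r, hS c hcS a haS hr1, s, hU d hdU b hbU hs1, PG.mem_star_comm hs2⟩

end ProjGeom

end Aux

/-- The lattice of subspaces of a projective geometry is modular: for subspaces
`S ⊆ T` and `U`, one has `cl (S ∪ (U ∩ T)) = cl (S ∪ U) ∩ T`. -/
theorem subspace_lattice_modular {G : Type*} (PG : ProjGeom G) (S T U : Set G)
    (hS : PG.IsSubspace S) (hT : PG.IsSubspace T) (hU : PG.IsSubspace U)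
    (hST : S ⊆ T) :
    PG.cl (S ∪ (U ∩ T)) = PG.cl (S ∪ U) ∩ T := by
  apply subset_antisymm
  · refine Set.subset_inter ?_ ?_
    · exact PG.cl_mono (Set.union_subset_union_right S Set.inter_subset_left)
    · exact PG.cl_subset hT (Set.union_subset hST Set.inter_subset_right)
  · rintro x ⟨hxcl, hxT⟩
    rcases U.eq_empty_or_nonempty with hUe | hUne
    · subst hUe
      simpa using hxcl
    rcases S.eq_empty_or_nonempty with hSe | hSne
    · subst hSe
      have : x ∈ U := by
        have := PG.cl_subset hU (by simp) hxcl
        exact this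
      exact PG.subset_cl _ (Or.inr ⟨this, hxT⟩)
    -- both nonempty
    set W : Set G := {x | ∃ a ∈ S, ∃ b ∈ U, x ∈ PG.star a b} with hW
    have hWsub : PG.IsSubspace W := PG.join_isSubspace hS hU
    have hSW : S ⊆ W := fun a ha => ⟨a, ha, hUne.choose, hUne.choose_spec, PG.mem_star_left _ _⟩
    have hUW : U ⊆ W := fun b hb => ⟨hSne.choose, hSne.choose_spec, b, hb, PG.mem_star_right _ _⟩
    have hxW : x ∈ W := PG.cl_subset hWsub (Set.union_subset hSW hUW) hxcl
    obtain ⟨r, hrS, s, hsU, hx⟩ := hxW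
    by_cases hxr : x = r
    · exact PG.subset_cl _ (Or.inl (hxr ▸ hrS))
    · have hsmem : s ∈ PG.star r x := PG.exchange hx hxr
      have hsT : s ∈ T := hT r (hST hrS) x hxT hsmem
      have hrc : r ∈ PG.cl (S ∪ (U ∩ T)) := PG.subset_cl _ (Or.inl hrS)
      have hsc : s ∈ PG.cl (S ∪ (U ∩ T)) := PG.subset_cl _ (Or.inr ⟨hsU, hsT⟩)
      exact PG.cl_isSubspace _ r hrc s hsc hx
end

section
/- A complete atomistic lattice L is meet-continuous — i.e., for every nonempty directed set D ⊆ L and every y ∈ L, y ⊓ sSup D = ⨆_{d ∈ D} (y ⊓ d) — if and only if every atom of L is compact, i.e., whenever an atom a satisfies a ≤ sSup D for a nonempty directed set D ⊆ L, then a ≤ d for some d ∈ D. -/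
/-- A complete atomistic lattice is meet-continuous if and only if its atoms are compact. -/
theorem continuous_iff_atoms_compact {L : Type*} [CompleteLattice L]
    (hatomistic : ∀ x : L, x = sSup {a : L | IsAtom a ∧ a ≤ x}) :
    (∀ D : Set L, D.Nonempty → DirectedOn (· ≤ ·) D → ∀ y : L,
        y ⊓ sSup D = ⨆ d ∈ D, y ⊓ d) ↔
      (∀ a : L, IsAtom a → ∀ D : Set L, D.Nonempty → DirectedOn (· ≤ ·) D →
        a ≤ sSup D → ∃ d ∈ D, a ≤ d) := by
  constructor
  · intro hcont a ha D hne hdir hle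
    have h : a = ⨆ d ∈ D, a ⊓ d := by
      rw [← hcont D hne hdir a, inf_eq_left.mpr hle]
    by_contra hnone
    push_neg at hnone
    have : ∀ d ∈ D, a ⊓ d = ⊥ := by
      intro d hd
      rcases (ha.le_iff.mp inf_le_left) with h0 | h1
      · exact h0
      · exact absurd ((le_of_eq h1.symm).trans inf_le_right) (hnone d hd)
    have hb : (⨆ d ∈ D, a ⊓ d) = ⊥ := by
      simp only [iSup_eq_bot]
      intro d
      by_cases hd : d ∈ D
      · simp [hd, this d hd]
      · simp [hd]
    exact ha.1 (h.trans hb)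
  · intro hcomp D hne hdir y
    apply le_antisymm
    · conv_lhs => rw [hatomistic (y ⊓ sSup D)]
      apply sSup_le
      rintro a ⟨ha, hale⟩
      obtain ⟨d, hd, had⟩ := hcomp a ha D hne hdir (hale.trans inf_le_right)
      exact le_trans (le_inf (hale.trans inf_le_left) had)
        (le_iSup_of_le d (le_iSup_of_le hd le_rfl))
    · exact iSup_le fun d => iSup_le fun hd =>
        inf_le_inf_left y (le_sSup hd)
end

section
/- Let L be a complete atomistic lattice which is lower semimodular (for all u,v ∈ L, u ⋖ u ⊔ v implies u ⊓ v ⋖ v) and satisfies the covering law (for every atom a and every x ∈ L with a ⊓ x = ⊥, x ⋖ a ⊔ x). Then L has the intersection property: for every x ∈ L and all atoms p ≠ q of L, if p ≤ q ⊔ x then (p ⊔ q) ⊓ x ≠ ⊥. -/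
/-- A complete atomistic lattice which is lower semimodular and satisfies the covering law
has the intersection property. -/
theorem intersection_property_of_lowerSemimodular_coveringLaw {L : Type*} [CompleteLattice L]
    (hatomistic : ∀ x : L, x = sSup {a : L | IsAtom a ∧ a ≤ x})
    (hlsm : ∀ u v : L, u ⋖ u ⊔ v → u ⊓ v ⋖ v)
    (hcov : ∀ a x : L, IsAtom a → a ⊓ x = ⊥ → x ⋖ a ⊔ x) :
    ∀ (x p q : L), IsAtom p → IsAtom q → p ≠ q → p ≤ q ⊔ x → (p ⊔ q) ⊓ x ≠ ⊥ := by
  intro x p q hp hq hpq hple h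
  have hpx : p ⊓ x = ⊥ := le_bot_iff.mp (h ▸ inf_le_inf_right x le_sup_left)
  have hqx : q ⊓ x = ⊥ := le_bot_iff.mp (h ▸ inf_le_inf_right x le_sup_right)
  have h1 : x ⋖ p ⊔ x := hcov p x hp hpx
  have h2 : x ⋖ q ⊔ x := hcov q x hq hqx
  have heq : p ⊔ x = q ⊔ x :=
    ((sup_le hple le_sup_right).lt_or_eq).resolve_left (h2.2 h1.lt)
  have hcovx : x ⋖ x ⊔ (p ⊔ q) := by
    have hx : x ⊔ (p ⊔ q) = p ⊔ x :=
      le_antisymm (sup_le le_sup_right (sup_le le_sup_left (heq ▸ le_sup_left)))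
        (sup_le (le_sup_of_le_right le_sup_left) le_sup_left)
    rw [hx]; exact h1
  have hbot : (⊥ : L) ⋖ p ⊔ q := by
    have := hlsm x (p ⊔ q) hcovx
    rwa [inf_comm, h] at this
  have hplt : p < p ⊔ q := lt_of_le_of_ne le_sup_left (by
    intro he
    exact hpq (hp.le_iff_eq hq.1 |>.mp (he ▸ le_sup_right) |>.symm))
  exact hbot.2 hp.1.bot_lt hplt
end

section
/- Let L be a complete atomistic lattice with the intersection property: for every x ∈ L and all atoms p ≠ q of L, p ≤ q ⊔ x implies (p ⊔ q) ⊓ x ≠ ⊥. Define a ternary relation on the set of atoms of L by l(a,b,c) iff a ≤ b ⊔ c or b = c. Then l satisfies the projective geometry axioms: (G1) l(a,b,a) for all atoms a,b; (G2) if l(a,p,q), l(b,p,q) and p ≠ q then l(a,b,p); (G3) if l(p,a,b) and l(p,c,d) then there exists an atom q with l(q,a,c) and l(q,b,d). -/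
/-- The type of atoms of a lattice. -/
def Atoms (L : Type*) [CompleteLattice L] : Type _ := {a : L // IsAtom a}

/-- The collinearity relation on the atoms of a lattice:
`l(a,b,c)` iff `a ≤ b ⊔ c` or `b = c`. -/
def atomCollinear {L : Type*} [CompleteLattice L] (a b c : Atoms L) : Prop :=
  a.1 ≤ b.1 ⊔ c.1 ∨ b = c

/-- In a complete atomistic lattice with the intersection property, the atoms form a
projective geometry for the relation `l(a,b,c)` iff `a ≤ b ⊔ c` or `b = c`:
the axioms (G1), (G2) and (G3) hold. -/
theorem atoms_form_projective_geometry {L : Type*} [CompleteLattice L]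
    (hatomistic : ∀ x : L, x = sSup {a : L | IsAtom a ∧ a ≤ x})
    (hip : ∀ (x p q : L), IsAtom p → IsAtom q → p ≠ q → p ≤ q ⊔ x → (p ⊔ q) ⊓ x ≠ ⊥) :
    (∀ a b : Atoms L, atomCollinear a b a) ∧
    (∀ a b p q : Atoms L, atomCollinear a p q → atomCollinear b p q → p ≠ q →
      atomCollinear a b p) ∧
    (∀ a b c d p : Atoms L, atomCollinear p a b → atomCollinear p c d →
      ∃ q : Atoms L, atomCollinear q a c ∧ atomCollinear q b d) := by
  classical
  have atom_le : ∀ (x d : L), IsAtom d → x ⊓ d ≠ ⊥ → d ≤ x := by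
    intro x d hd h
    rcases hd.le_iff.mp (inf_le_right : x ⊓ d ≤ d) with h2 | h2
    · exact absurd h2 h
    · exact h2.symm.trans_le inf_le_left
  have exists_atom : ∀ x : L, x ≠ ⊥ → ∃ a : L, IsAtom a ∧ a ≤ x := by
    intro x hx
    by_contra h
    push_neg at h
    have hempty : {a : L | IsAtom a ∧ a ≤ x} = ∅ := by
      ext a
      simp only [Set.mem_setOf_eq, Set.mem_empty_iff_false, iff_false, not_and]
      exact fun ha hle => (h a ha hle).elim
    exact hx (by rw [hatomistic x, hempty, sSup_empty])
  refine ⟨fun a b => Or.inl le_sup_right, ?_, ?_⟩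
  · -- G2
    intro a b p q ha hb hpq
    rcases ha with ha | h
    · rcases hb with hb | h
      · by_cases hbq : b = q
        · subst hbq
          exact Or.inl (ha.trans (sup_le le_sup_right le_sup_left))
        by_cases hbp : b = p
        · exact Or.inr hbp
        left
        have hne : b.1 ≠ p.1 := fun h => hbp (Subtype.ext h)
        have h2 : (b.1 ⊔ p.1) ⊓ q.1 ≠ ⊥ := hip q.1 b.1 p.1 b.2 p.2 hne hb
        have h3 : q.1 ≤ b.1 ⊔ p.1 := atom_le _ _ q.2 h2
        exact ha.trans (sup_le le_sup_right h3)
      · exact absurd h hpq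
    · exact absurd h hpq
  · -- G3
    intro a b c d p hp1 hp2
    rcases hp1 with hp1 | hab
    · rcases hp2 with hp2 | hcd
      · by_cases hac : a = c
        · exact ⟨b, Or.inr hac, Or.inl le_sup_left⟩
        by_cases hbd : b = d
        · exact ⟨a, Or.inl le_sup_left, Or.inr hbd⟩
        by_cases hpc : p = c
        · -- c ≤ a ⊔ b, take q := b
          have hc : c.1 ≤ a.1 ⊔ b.1 := hpc ▸ hp1
          have hne : c.1 ≠ a.1 := fun h => hac (Subtype.ext h.symm)
          have h2 : (c.1 ⊔ a.1) ⊓ b.1 ≠ ⊥ := hip b.1 c.1 a.1 c.2 a.2 hne hc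
          have h3 : b.1 ≤ c.1 ⊔ a.1 := atom_le _ _ b.2 h2
          exact ⟨b, Or.inl (h3.trans (sup_comm _ _).le), Or.inl le_sup_left⟩
        by_cases hpd : p = d
        · -- d ≤ a ⊔ b, take q := a
          have hd : d.1 ≤ a.1 ⊔ b.1 := hpd ▸ hp1
          have hne : d.1 ≠ b.1 := fun h => hbd (Subtype.ext h.symm)
          have h2 : (d.1 ⊔ b.1) ⊓ a.1 ≠ ⊥ :=
            hip a.1 d.1 b.1 d.2 b.2 hne (hd.trans (sup_comm _ _).le)
          have h3 : a.1 ≤ d.1 ⊔ b.1 := atom_le _ _ a.2 h2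
          exact ⟨a, Or.inl le_sup_left, Or.inl (h3.trans (sup_comm _ _).le)⟩
        · -- main case
          have hnepc : p.1 ≠ c.1 := fun h => hpc (Subtype.ext h)
          have h2 : (p.1 ⊔ c.1) ⊓ d.1 ≠ ⊥ := hip d.1 p.1 c.1 p.2 c.2 hnepc hp2
          have hdp : d.1 ≤ p.1 ⊔ c.1 := atom_le _ _ d.2 h2
          have hd : d.1 ≤ b.1 ⊔ (a.1 ⊔ c.1) :=
            hdp.trans (sup_le
              (hp1.trans (sup_le (le_sup_left.trans le_sup_right) le_sup_left))
              (le_sup_right.trans le_sup_right))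
          have hne : d.1 ≠ b.1 := fun h => hbd (Subtype.ext h.symm)
          have h3 : (d.1 ⊔ b.1) ⊓ (a.1 ⊔ c.1) ≠ ⊥ :=
            hip (a.1 ⊔ c.1) d.1 b.1 d.2 b.2 hne hd
          obtain ⟨q, hq, hqle⟩ := exists_atom _ h3
          exact ⟨⟨q, hq⟩, Or.inl (hqle.trans inf_le_right),
            Or.inl ((hqle.trans inf_le_left).trans (sup_comm _ _).le)⟩
      · subst hcd
        exact ⟨c, Or.inl le_sup_right, Or.inl le_sup_right⟩
    · exact ⟨a, Or.inl le_sup_left, Or.inl (hab ▸ le_sup_left)⟩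
end

section
/- Let L be a projective lattice: a complete lattice which is atomistic (every element is the supremum of the atoms below it), in which every atom is compact (if an atom a satisfies a ≤ sSup D for a nonempty directed set D then a ≤ d for some d ∈ D), and which is modular. Let 𝒢(L) be the set of atoms of L with collinearity l(a,b,c) iff a ≤ b ⊔ c or b = c, and call S ⊆ 𝒢(L) a subspace if for all a,b ∈ S, every atom c with l(c,a,b) lies in S. Then the map β_L : x ↦ {a ∈ 𝒢(L) | a ≤ x} is an order isomorphism from L onto the set of subspaces of 𝒢(L) ordered by inclusion: β_L is injective, its image is exactly the set of subspaces of 𝒢(L), and x ≤ y if and only if β_L(x) ⊆ β_L(y). -/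
/-- A subspace of the projective geometry of atoms of a lattice `L`: a set `S` of atoms
such that for all `a, b ∈ S`, every atom `c` on the line through `a` and `b`
(i.e. with `c ≤ a ⊔ b`) lies in `S`. -/
def IsAtomSubspace {L : Type*} [CompleteLattice L] (S : Set (Atoms L)) : Prop :=
  ∀ a ∈ S, ∀ b ∈ S, ∀ c : Atoms L, c.1 ≤ a.1 ⊔ b.1 → c ∈ S

/-!
Atomisticity recovers `x` from the atoms below it, which gives injectivity and order reflection.
For a subspace `S`, an atom below `sSup S` lies, by compactness, below a finite join of atoms of
`S`; modularity lets one peel these atoms off one at a time, each step staying on a line through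
two points already known to be in `S`.
-/

-- The witness is `c = x ⊓ (a ⊔ b)`: modularity gives `b ⊔ c = a ⊔ b`, which covers `b`.
theorem IsAtom.exists_atom_le_of_le_sup {L : Type*} [Lattice L] [OrderBot L]
    [IsModularLattice L] {a b x : L} (ha : IsAtom a) (hb : IsAtom b) (hab : a ≠ b)
    (h : a ≤ b ⊔ x) : ∃ c, IsAtom c ∧ c ≤ x ∧ a ≤ b ⊔ c := by
  by_cases hbx : b ≤ x
  · exact ⟨a, ha, h.trans (sup_le hbx le_rfl), le_sup_right⟩
  set c := x ⊓ (a ⊔ b)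
  have hbc : b ⊔ c = a ⊔ b := by
    rw [← sup_inf_assoc_of_le x le_sup_right]
    exact inf_eq_right.2 (sup_le h le_sup_left)
  have hb_cov : b ⋖ b ⊔ c :=
    hbc ▸ covBy_sup_of_inf_covBy_left ((ha.disjoint_of_ne hb hab).eq_bot ▸ ha.bot_covBy)
  have hbc_bot : b ⊓ c = ⊥ := ((hb.not_le_iff_disjoint.1 hbx).mono_right inf_le_left).eq_bot
  exact ⟨c, (hbc_bot ▸ inf_covBy_of_covBy_sup_left hb_cov).is_atom, inf_le_left,
    hbc.symm ▸ le_sup_left⟩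

section AtomSubspace

variable {L : Type*} [CompleteLattice L]

theorem isAtomSubspace_setOf_le (x : L) : IsAtomSubspace {a : Atoms L | a.1 ≤ x} :=
  fun _ ha _ hb _ hc => hc.trans (sup_le ha hb)

theorem setOf_atoms_le_subset_iff [IsAtomistic L] {x y : L} :
    {a : Atoms L | a.1 ≤ x} ⊆ {a : Atoms L | a.1 ≤ y} ↔ x ≤ y :=
  ⟨fun h => le_iff_atom_le_imp.2 fun c hc hcx => h (a := ⟨c, hc⟩) hcx,
    fun hxy _ ha => le_trans ha hxy⟩

theorem setOf_atoms_le_injective [IsAtomistic L] :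
    Function.Injective fun x : L => {a : Atoms L | a.1 ≤ x} := fun _ _ h =>
  le_antisymm (setOf_atoms_le_subset_iff.1 h.le) (setOf_atoms_le_subset_iff.1 h.ge)

theorem IsAtomSubspace.mem_of_le_finset_sup [IsModularLattice L] {S : Set (Atoms L)}
    (hS : IsAtomSubspace S) {F : Finset (Atoms L)} (hF : ↑F ⊆ S) {a : Atoms L}
    (ha : a.1 ≤ F.sup Subtype.val) : a ∈ S := by
  classical
  induction F using Finset.induction_on generalizing a with
  | empty => exact absurd (le_bot_iff.1 ha) a.2.ne_bot
  | insert b F _ ih =>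
    rw [Finset.coe_insert, Set.insert_subset_iff] at hF
    by_cases hab : a = b
    · exact hab ▸ hF.1
    obtain ⟨c, hc, hcF, hac⟩ :=
      a.2.exists_atom_le_of_le_sup b.2 (Subtype.coe_injective.ne hab)
        (ha.trans_eq Finset.sup_insert)
    exact hS b hF.1 ⟨c, hc⟩ (ih hF.2 hcF) a hac

theorem IsAtomSubspace.eq_setOf_le_sSup [IsModularLattice L]
    (hcompact : ∀ a : L, IsAtom a → IsCompactElement a)
    {S : Set (Atoms L)} (hS : IsAtomSubspace S) :
    S = {a : Atoms L | a.1 ≤ sSup (Subtype.val '' S)} := by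
  classical
  refine Set.Subset.antisymm (fun a ha => le_sSup ⟨a, ha, rfl⟩) fun a ha => ?_
  obtain ⟨t, htS, hat⟩ :=
    (CompleteLattice.isCompactElement_iff_exists_le_sSup_of_le_sSup L a.1).1
      (hcompact a.1 a.2) _ ha
  obtain ⟨F, hFS, rfl⟩ := Finset.subset_set_image_iff.1 htS
  rw [Finset.sup_image, Function.id_comp] at hat
  exact hS.mem_of_le_finset_sup hFS hat

end AtomSubspace

/-- For a projective lattice `L` (complete, atomistic, atoms compact, modular), the map
`β_L : x ↦ {a atom | a ≤ x}` is an order isomorphism from `L` onto the set of subspaces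
of the projective geometry of atoms `𝒢(L)`, ordered by inclusion: it is injective, its
image is exactly the set of subspaces, and it preserves and reflects order. -/
theorem projLattice_iso_subspaces {L : Type*} [CompleteLattice L]
    (hatomistic : ∀ x : L, x = sSup {a : L | IsAtom a ∧ a ≤ x})
    (hcompact : ∀ a : L, IsAtom a → ∀ D : Set L, D.Nonempty → DirectedOn (· ≤ ·) D →
      a ≤ sSup D → ∃ d ∈ D, a ≤ d)
    (hmod : ∀ x y z : L, x ≤ z → x ⊔ (y ⊓ z) = (x ⊔ y) ⊓ z) :
    Function.Injective (fun x : L => {a : Atoms L | a.1 ≤ x}) ∧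
    (∀ x : L, IsAtomSubspace {a : Atoms L | a.1 ≤ x}) ∧
    (∀ S : Set (Atoms L), IsAtomSubspace S → ∃ x : L, S = {a : Atoms L | a.1 ≤ x}) ∧
    (∀ x y : L, x ≤ y ↔ {a : Atoms L | a.1 ≤ x} ⊆ {a : Atoms L | a.1 ≤ y}) := by
  have : IsAtomistic L :=
    CompleteLattice.isAtomistic_iff.2 fun x => ⟨_, hatomistic x, fun _ ha => ha.1⟩
  have : IsModularLattice L := ⟨fun y _ hxz => (hmod _ y _ hxz).ge⟩
  have hcompact' (a : L) (ha : IsAtom a) : IsCompactElement a :=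
    (CompleteLattice.isCompactElement_iff_le_of_directed_sSup_le L a).2 (hcompact a ha)
  exact ⟨setOf_atoms_le_injective, isAtomSubspace_setOf_le,
    fun S hS => ⟨_, hS.eq_setOf_le_sSup hcompact'⟩, fun _ _ => setOf_atoms_le_subset_iff.symm⟩
end

section
/- Let G be a projective geometry. Define a ∼ b iff a = b or there exists c with c ≠ a, c ≠ b and l(c,a,b). Then ∼ is an equivalence relation on G, each equivalence class is an irreducible subspace of G, every non-empty irreducible subspace of G is contained in some equivalence class, and no equivalence class is strictly contained in an irreducible subspace; thus the equivalence classes are precisely the maximal irreducible subspaces of G. -/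
/-- The relation `a ∼ b` iff `a = b` or there is a third point `c` on the line through
`a` and `b`. -/
def ProjGeom.simRel {G : Type*} (PG : ProjGeom G) (a b : G) : Prop :=
  a = b ∨ ∃ c, c ≠ a ∧ c ≠ b ∧ PG.l c a b

/-- A subset `S` is irreducible if for all distinct `a, b ∈ S` there is a third point on
the line through `a` and `b`. -/
def ProjGeom.IsIrreducibleSubset {G : Type*} (PG : ProjGeom G) (S : Set G) : Prop :=
  ∀ a ∈ S, ∀ b ∈ S, a ≠ b → ∃ c, c ≠ a ∧ c ≠ b ∧ PG.l c a b

namespace ProjGeom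
variable {G : Type*} (PG : ProjGeom G)

lemma sw23 {a b x : G} (h : a ≠ b) (hx : PG.l x a b) : PG.l x b a :=
  PG.g2 x b a b hx (PG.g1 b a) h

lemma sw12 {a b c : G} (h : a ≠ b) (hc : PG.l c a b) : PG.l a c b :=
  PG.g2 a c b a (PG.g1 a b) (PG.sw23 h hc) h.symm

lemma third {a b c : G} (hab : a ≠ b) (hca : c ≠ a) (h : PG.l c a b) : PG.l b a c :=
  PG.sw23 hca (PG.sw12 hab.symm (PG.sw23 hab h))

lemma transAux {a b c p q : G} (hab : a ≠ b) (hbc : b ≠ c) (hac : a ≠ c)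
    (hpq : p ≠ q)
    (hpa : p ≠ a) (hpb : p ≠ b) (hp : PG.l p a b)
    (hqb : q ≠ b) (hqc : q ≠ c) (hq : PG.l q b c)
    (hapq : PG.l a p q) :
    ∃ r, r ≠ a ∧ r ≠ c ∧ PG.l r a c := by
  by_cases hqa : q = a
  · subst hqa
    exact ⟨b, hab.symm, hbc, PG.sw12 hbc hq⟩
  · have h1 : PG.l q a p := PG.g2 q a p q (PG.g1 q p) hapq hpq
    have h2 : PG.l b a p := PG.sw12 hpb.symm (PG.sw23 hpb (PG.sw12 hab hp))
    have h3 : PG.l q b a := PG.g2 q b a p h1 h2 hpa.symm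
    have h4 : PG.l a b q := PG.sw12 (fun h => hqa h.symm)
      (PG.sw23 hqa (PG.sw12 hab.symm h3))
    have h5 : PG.l c b q := PG.sw12 hqc.symm (PG.sw23 hqc (PG.sw12 hbc hq))
    have h6 : PG.l a c b := PG.g2 a c b q h4 h5 hqb.symm
    have h7 : PG.l c a b := PG.sw12 hbc.symm h6
    exact ⟨b, hab.symm, hbc, PG.third hab hac.symm h7⟩

lemma sim_symm {a b : G} (h : PG.simRel a b) : PG.simRel b a := by
  rcases h with h | ⟨c, hca, hcb, hc⟩
  · exact Or.inl h.symm
  · by_cases hab : a = b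
    · subst hab; exact Or.inl rfl
    · exact Or.inr ⟨c, hcb, hca, PG.sw23 hab hc⟩

lemma sim_trans {a b c : G} (h1 : PG.simRel a b) (h2 : PG.simRel b c) :
    PG.simRel a c := by
  rcases h1 with h1 | ⟨p, hpa, hpb, hp⟩
  · subst h1; exact h2
  rcases h2 with h2 | ⟨q, hqb, hqc, hq⟩
  · subst h2; exact Or.inr ⟨p, hpa, hpb, hp⟩
  by_cases hab : a = b
  · subst hab; exact Or.inr ⟨q, hqb, hqc, hq⟩
  by_cases hbc : b = c
  · subst hbc; exact Or.inr ⟨p, hpa, hpb, hp⟩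
  replace hab : a ≠ b := hab
  replace hbc : b ≠ c := hbc
  by_cases hac : a = c
  · exact Or.inl hac
  by_cases hpq : p = q
  · subst hpq
    have h1 : PG.l a p b := PG.sw12 hab hp
    have h2 : PG.l c p b := PG.sw12 hbc.symm (PG.sw23 hbc hq)
    have h3 : PG.l a c p := PG.g2 a c p b h1 h2 hpb
    exact Or.inr ⟨p, hpa, hqc, PG.sw12 hqc (PG.sw23 (fun h => hqc h.symm) h3)⟩
  · have hbpa : PG.l b p a := PG.sw12 hab.symm (PG.sw23 hab hp)
    have hbqc : PG.l b q c := PG.sw12 hbc hq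
    obtain ⟨r, hr1, hr2⟩ := PG.g3 p a q c b hbpa hbqc
    by_cases hra : r = a
    · rw [hra] at hr1
      exact Or.inr (PG.transAux hab hbc hac hpq hpa hpb hp hqb hqc hq hr1)
    by_cases hrc : r = c
    · rw [hrc] at hr1
      have h' : PG.l c q p := PG.sw23 hpq hr1
      have hq' : PG.l q c b := PG.sw23 hbc hq
      have hp' : PG.l p b a := PG.sw23 hab hp
      obtain ⟨s, hs1, hs2, hs3⟩ := PG.transAux hbc.symm hab.symm (Ne.symm hac)
        (Ne.symm hpq) hqc hqb hq' hpb hpa hp' h'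
      exact Or.inr ⟨s, hs2, hs1, PG.sw23 (Ne.symm hac) hs3⟩
    · exact Or.inr ⟨r, hra, hrc, hr2⟩

end ProjGeom

/-- The relation `∼` is an equivalence relation; its classes are irreducible subspaces,
every non-empty irreducible subspace is contained in a class, and no class is strictly
contained in an irreducible subspace: the classes are exactly the maximal irreducible
subspaces. -/
theorem maximal_irreducible_subspaces {G : Type*} (PG : ProjGeom G) :
    Equivalence PG.simRel ∧
    (∀ a : G, PG.IsSubspace {b | PG.simRel a b} ∧
      PG.IsIrreducibleSubset {b | PG.simRel a b}) ∧
    (∀ S : Set G, PG.IsSubspace S → PG.IsIrreducibleSubset S → S.Nonempty →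
      ∃ a : G, S ⊆ {b | PG.simRel a b}) ∧
    (∀ (a : G) (S : Set G), PG.IsSubspace S → PG.IsIrreducibleSubset S →
      {b | PG.simRel a b} ⊆ S → S = {b | PG.simRel a b}) := by
  refine ⟨⟨fun a => Or.inl rfl, PG.sim_symm, PG.sim_trans⟩, ?_, ?_, ?_⟩
  · intro a
    constructor
    · intro x hx y hy z hz
      by_cases hxy : x = y
      · subst hxy
        simp only [ProjGeom.star, if_pos rfl, Set.mem_singleton_iff] at hz
        subst hz; exact hx
      · simp only [ProjGeom.star, if_neg hxy, Set.mem_setOf_eq] at hz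
        by_cases hzx : z = x
        · subst hzx; exact hx
        by_cases hzy : z = y
        · subst hzy; exact hy
        have hxz : PG.simRel x z :=
          Or.inr ⟨y, Ne.symm hxy, fun h => hzy h.symm, PG.third hxy hzx hz⟩
        exact PG.sim_trans hx hxz
    · intro x hx y hy hxy
      rcases PG.sim_trans (PG.sim_symm hx) hy with h | h
      · exact absurd h hxy
      · exact h
  · intro S _ hirr ⟨a, ha⟩
    refine ⟨a, fun b hb => ?_⟩
    by_cases hab : a = b
    · exact Or.inl hab
    · exact Or.inr (hirr a ha b hb hab)
  · intro a S _ hirr hsub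
    refine Set.Subset.antisymm (fun x hx => ?_) hsub
    have ha : a ∈ S := hsub (Or.inl rfl)
    by_cases hax : a = x
    · exact Or.inl hax
    · exact Or.inr (hirr a ha x hx hax)
end

section
/- Let V1 be an abelian group and V2 a vector space over a division ring K2, and let f1, f2 : V1 → V2 be additive maps. Assume that for every x ∈ V1 there exists k ∈ K2 with f2(x) = k • f1(x), and that the image of f1 contains two K2-linearly independent vectors. Then there exists μ ∈ K2 such that f2(x) = μ • f1(x) for every x ∈ V1. -/
/-- If two additive maps `f1 f2 : V1 → V2` into a `K2`-vector space satisfy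
`f2 x ∈ K2 • f1 x` pointwise and the image of `f1` contains two linearly independent
vectors, then `f2 = μ • f1` for some scalar `μ`. -/
theorem proportional_of_pointwise_dependent {V1 : Type*} [AddCommGroup V1]
    {K2 : Type*} [DivisionRing K2] {V2 : Type*} [AddCommGroup V2] [Module K2 V2]
    (f1 f2 : V1 → V2)
    (hf1 : ∀ x y : V1, f1 (x + y) = f1 x + f1 y)
    (hf2 : ∀ x y : V1, f2 (x + y) = f2 x + f2 y)
    (hdep : ∀ x : V1, ∃ k : K2, f2 x = k • f1 x)
    (hind : ∃ u v : V1, LinearIndependent K2 ![f1 u, f1 v]) :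
    ∃ μ : K2, ∀ x : V1, f2 x = μ • f1 x := by
  obtain ⟨u, v, huv⟩ := hind
  rw [LinearIndependent.pair_iff] at huv
  obtain ⟨μ, hμ⟩ := hdep u
  obtain ⟨ν, hν⟩ := hdep v
  have hu0 : f1 u ≠ 0 := by
    intro h
    have := (huv 1 0 (by simp [h])).1
    exact one_ne_zero this
  have key : ∀ a b : V1, ∀ ka kb : K2,
      (∀ s t : K2, s • f1 a + t • f1 b = 0 → s = 0 ∧ t = 0) →
      f2 a = ka • f1 a → f2 b = kb • f1 b → ka = kb := by
    intro a b ka kb hab ha hb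
    obtain ⟨k, hk⟩ := hdep (a + b)
    rw [hf1, hf2, ha, hb, smul_add] at hk
    have h : (ka - k) • f1 a + (kb - k) • f1 b = 0 := by
      rw [sub_smul, sub_smul, sub_add_sub_comm, hk, sub_self]
    obtain ⟨h1, h2⟩ := hab _ _ h
    rw [sub_eq_zero] at h1 h2
    rw [h1, h2]
  have hμν : μ = ν := key u v μ ν huv hμ hν
  refine ⟨μ, fun x => ?_⟩
  obtain ⟨kx, hkx⟩ := hdep x
  by_cases hx0 : f1 x = 0
  · rw [hkx, hx0, smul_zero, smul_zero]
  by_cases hxu : ∀ s t : K2, s • f1 x + t • f1 u = 0 → s = 0 ∧ t = 0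
  · rw [hkx, key x u kx μ hxu hkx hμ]
  · push_neg at hxu
    obtain ⟨s, t, hst, hne⟩ := hxu
    have hs : s ≠ 0 := by
      intro h
      rw [h, zero_smul, zero_add] at hst
      rcases smul_eq_zero.mp hst with ht | h0
      · exact hne h ht
      · exact hu0 h0
    have hxc : f1 x = (-(s⁻¹ * t)) • f1 u := by
      have h : s • f1 x = -(t • f1 u) := by
        rwa [add_eq_zero_iff_eq_neg] at hst
      calc f1 x = s⁻¹ • (s • f1 x) := by
            rw [smul_smul, inv_mul_cancel₀ hs, one_smul]
        _ = (-(s⁻¹ * t)) • f1 u := by rw [h, smul_neg, smul_smul, neg_smul]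
    have hc : (-(s⁻¹ * t)) ≠ 0 := by
      intro h
      rw [h, zero_smul] at hxc
      exact hx0 hxc
    have hxv : ∀ a b : K2, a • f1 x + b • f1 v = 0 → a = 0 ∧ b = 0 := by
      intro a b h
      rw [hxc, smul_smul] at h
      obtain ⟨h1, h2⟩ := huv _ _ h
      exact ⟨(mul_eq_zero.mp h1).resolve_right hc, h2⟩
    rw [hkx, key x v kx ν hxv hkx hν, hμν]
end

section
/- Second Fundamental Theorem of projective geometry: Let V1 be a vector space over a division ring K1 and V2 a vector space over a division ring K2. Let D ⊆ ℙ(V1) and let g : D → ℙ(V2) be a morphism of projective geometries, i.e., for every subspace T of ℙ(V2) the set (ℙ(V1) \ D) ∪ g⁻¹(T) is a subspace of ℙ(V1). Assume g is non-degenerate: there are three points in the image of g whose representative vectors are K2-linearly independent. Then there exist a ring homomorphism σ : K1 → K2 and a σ-semilinear map f : V1 → V2 such that for every nonzero v ∈ V1: [v] ∈ D if and only if f(v) ≠ 0, and if f(v) ≠ 0 then g([v]) = [f(v)]. Moreover f is unique up to a nonzero scalar: if σ' and σ'-semilinear f' also satisfy these conditions, then there exists a nonzero μ ∈ K2 with f'(v)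 = μ f(v) for all v ∈ V1. -/
def ProjSubspace (K : Type*) {V : Type*} [DivisionRing K] [AddCommGroup V] [Module K V]
    (S : Set (Projectivization K V)) : Prop :=
  ∀ (y z : V) (hy : y ≠ 0) (hz : z ≠ 0),
    Projectivization.mk K y hy ∈ S → Projectivization.mk K z hz ∈ S →
    ∀ (x : V) (hx : x ≠ 0), x ∈ Submodule.span K {y, z} →
      Projectivization.mk K x hx ∈ S

namespace SFT

open Projectivization Submodule

variable {K1 K2 V1 V2 : Type*}
    [DivisionRing K1] [DivisionRing K2]
    [AddCommGroup V1] [Module K1 V1] [AddCommGroup V2] [Module K2 V2]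

/-- `x` is zero or represents a point outside the domain `D`. -/
def Ker (D : Set (Projectivization K1 V1)) (x : V1) : Prop :=
  ∀ h : x ≠ 0, Projectivization.mk K1 x h ∉ D

/-- vectorized version of `g`, with default value `d0` at `0`. -/
noncomputable def gv (g : Projectivization K1 V1 → Projectivization K2 V2)
    (d0 : Projectivization K2 V2) (x : V1) : Projectivization K2 V2 :=
  open scoped Classical in
  if h : x ≠ 0 then g (Projectivization.mk K1 x h) else d0

/-- `x` is zero, or out of the domain, or is mapped into `T`. -/
def PtT (D : Set (Projectivization K1 V1)) (g : Projectivization K1 V1 → Projectivization K2 V2)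
    (T : Set (Projectivization K2 V2)) (x : V1) : Prop :=
  ∀ h : x ≠ 0, Projectivization.mk K1 x h ∈ D → g (Projectivization.mk K1 x h) ∈ T

variable {D : Set (Projectivization K1 V1)}
  {g : Projectivization K1 V1 → Projectivization K2 V2} {d0 : Projectivization K2 V2}

theorem gv_eq {x : V1} (h : x ≠ 0) : gv g d0 x = g (Projectivization.mk K1 x h) := dif_pos h

theorem gv_eq' {x : V1} (h : x ≠ 0) : g (Projectivization.mk K1 x h) = gv g d0 x := by
  symm; exact dif_pos h

theorem ker_zero : Ker D (0 : V1) := fun h => absurd rfl h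

theorem not_ker_nonzero {x : V1} (h : ¬ Ker D x) : x ≠ 0 := by
  intro h0; subst h0; exact h ker_zero

theorem not_ker_mem {x : V1} (h : ¬ Ker D x) (hx : x ≠ 0) : Projectivization.mk K1 x hx ∈ D := by
  by_contra hc
  exact h (fun h' => hc)

section

variable (hmor : ∀ T : Set (Projectivization K2 V2), ProjSubspace K2 T →
      ProjSubspace K1 (Dᶜ ∪ {p ∈ D | g p ∈ T}))

include hmor

theorem ptT_closure {T : Set (Projectivization K2 V2)} (hT : ProjSubspace K2 T)
    {x y z : V1} (hx : PtT D g T x) (hy : PtT D g T y)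
    (hz : z ∈ Submodule.span K1 {x, y}) : PtT D g T z := by
  intro hz0 hzD
  have hmem : ∀ (w : V1) (hw : w ≠ 0), PtT D g T w →
      Projectivization.mk K1 w hw ∈ (Dᶜ ∪ {p ∈ D | g p ∈ T}) := by
    intro w hw hPt
    by_cases hD : Projectivization.mk K1 w hw ∈ D
    · exact Or.inr ⟨hD, hPt hw hD⟩
    · exact Or.inl hD
  have hmem' : ∀ (w : V1) (hw : w ≠ 0),
      Projectivization.mk K1 w hw ∈ (Dᶜ ∪ {p ∈ D | g p ∈ T}) → PtT D g T w := by
    intro w hw hS h' hD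
    rcases hS with hS | hS
    · exact absurd hD hS
    · exact hS.2
  by_cases hx0 : x = 0
  · subst hx0
    rw [show ({(0 : V1), y} : Set V1) = insert 0 {y} from rfl, Submodule.span_insert_zero] at hz
    by_cases hy0 : y = 0
    · subst hy0
      rw [Submodule.span_zero_singleton] at hz
      exact absurd hz hz0
    · have h1 := hmor T hT y y hy0 hy0 (hmem y hy0 hy) (hmem y hy0 hy) z hz0
        (by rwa [Set.pair_eq_singleton])
      exact hmem' z hz0 h1 hz0 hzD
  · by_cases hy0 : y = 0
    · subst hy0
      have hz' : z ∈ Submodule.span K1 {x} := by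
        rwa [show ({x, (0 : V1)} : Set V1) = insert x {0} from rfl,
          Submodule.span_insert, Submodule.span_zero_singleton, sup_bot_eq] at hz
      have h1 := hmor T hT x x hx0 hx0 (hmem x hx0 hx) (hmem x hx0 hx) z hz0
        (by rwa [Set.pair_eq_singleton])
      exact hmem' z hz0 h1 hz0 hzD
    · have h1 := hmor T hT x y hx0 hy0 (hmem x hx0 hx) (hmem y hy0 hy) z hz0 hz
      exact hmem' z hz0 h1 hz0 hzD

theorem ker_closure0 {x y z : V1} (hx : Ker D x) (hy : Ker D y)
    (hz : z ∈ Submodule.span K1 {x, y}) : Ker D z := by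
  have h := ptT_closure (T := (∅ : Set (Projectivization K2 V2))) hmor
    (fun y z hy hz h1 _ _ _ _ => absurd h1 (Set.notMem_empty _))
    (x := x) (y := y) (z := z) (fun h hD => absurd hD (hx h)) (fun h hD => absurd hD (hy h)) hz
  intro h0 hD
  exact h h0 hD


theorem ker_smul {x : V1} (c : K1) (hx : Ker D x) : Ker D (c • x) :=
  ker_closure0 hmor hx hx (Submodule.mem_span_pair.2 ⟨c, 0, by simp⟩)

theorem ker_add {x y : V1} (hx : Ker D x) (hy : Ker D y) : Ker D (x + y) :=
  ker_closure0 hmor hx hy (Submodule.mem_span_pair.2 ⟨1, 1, by simp⟩)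

theorem not_ker_smul {x : V1} {c : K1} (hx : ¬ Ker D x) (hc : c ≠ 0) : ¬ Ker D (c • x) := by
  intro h
  exact hx (by simpa [smul_smul, inv_mul_cancel₀ hc] using ker_smul hmor c⁻¹ h)

theorem not_ker_neg {x : V1} (hx : ¬ Ker D x) : ¬ Ker D (-x) := by
  simpa using not_ker_smul hmor (c := (-1 : K1)) hx (by norm_num)

theorem not_ker_add_ker {x y : V1} (hx : ¬ Ker D x) (hy : Ker D y) : ¬ Ker D (x + y) := by
  intro h
  have := ker_closure0 hmor h (ker_smul hmor (-1) hy)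
    (Submodule.mem_span_pair.2 (⟨1, 1, by simp only [one_smul, neg_one_smul]; abel⟩ :
      ∃ a b : K1, a • (x + y) + b • ((-1 : K1) • y) = x))
  exact hx this

end

theorem gv_smul {x : V1} {c : K1} (hx : x ≠ 0) (hc : c ≠ 0) : gv g d0 (c • x) = gv g d0 x := by
  rw [gv_eq (smul_ne_zero hc hx), gv_eq hx]
  congr 1
  rw [Projectivization.mk_eq_mk_iff]
  exact ⟨Units.mk0 c hc, rfl⟩

theorem gv_neg {x : V1} (hx : x ≠ 0) : gv g d0 (-x) = gv g d0 x := by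
  simpa using gv_smul (d0 := d0) (g := g) (c := (-1:K1)) hx (by norm_num)

/-- The set of points of `ℙ(V2)` lying in a submodule `W`. -/
def spanT (W : Submodule K2 V2) : Set (Projectivization K2 V2) := {p | p.rep ∈ W}

theorem mem_spanT {W : Submodule K2 V2} {w : V2} (hw : w ≠ 0) :
    Projectivization.mk K2 w hw ∈ spanT W ↔ w ∈ W := by
  obtain ⟨a, ha⟩ := Projectivization.exists_smul_eq_mk_rep K2 w hw
  constructor
  · intro h
    rw [Units.smul_def] at ha
    have h2 : (a : K2) • w ∈ W := by rw [ha]; exact h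
    have h3 := W.smul_mem ((a : K2))⁻¹ h2
    rwa [smul_smul, inv_mul_cancel₀ (Units.ne_zero a), one_smul] at h3
  · intro h
    show (Projectivization.mk K2 w hw).rep ∈ W
    rw [← ha]
    exact W.smul_mem _ h

theorem spanT_subspace (W : Submodule K2 V2) : ProjSubspace K2 (spanT W) := by
  intro y z hy hz hyW hzW x hx hxs
  rw [mem_spanT] at *
  have : Submodule.span K2 {y, z} ≤ W :=
    Submodule.span_le.2 (by rintro t (rfl | rfl); exacts [hyW, by simpa using hzW])
  exact this hxs

theorem rep_mem_span_singleton_iff {p q : Projectivization K2 V2} :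
    p.rep ∈ Submodule.span K2 {q.rep} ↔ p = q := by
  constructor
  · intro h
    obtain ⟨c, hc⟩ := Submodule.mem_span_singleton.1 h
    have hc0 : c ≠ 0 := by
      rintro rfl
      exact p.rep_nonzero (by simpa using hc.symm)
    rw [← p.mk_rep, ← q.mk_rep, Projectivization.mk_eq_mk_iff']
    exact ⟨c, hc⟩
  · rintro rfl
    exact Submodule.mem_span_singleton_self _

section

variable (hmor : ∀ T : Set (Projectivization K2 V2), ProjSubspace K2 T →
      ProjSubspace K1 (Dᶜ ∪ {p ∈ D | g p ∈ T}))

include hmor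

theorem collinear {x y z : V1} (hx : ¬ Ker D x) (hy : ¬ Ker D y) (hz : ¬ Ker D z)
    (h : z ∈ Submodule.span K1 {x, y}) :
    (gv g d0 z).rep ∈ Submodule.span K2 {(gv g d0 x).rep, (gv g d0 y).rep} := by
  set W := Submodule.span K2 {(gv g d0 x).rep, (gv g d0 y).rep}
  have key : PtT D g (spanT W) z := by
    refine ptT_closure hmor (spanT_subspace W) (x := x) (y := y) ?_ ?_ h
    · intro h0 hD
      rw [gv_eq' (g := g) (d0 := d0) h0]
      show (gv g d0 x).rep ∈ W
      exact Submodule.subset_span (by left; rfl)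
    · intro h0 hD
      rw [gv_eq' (g := g) (d0 := d0) h0]
      show (gv g d0 y).rep ∈ W
      exact Submodule.subset_span (by right; rfl)
  have hz0 := not_ker_nonzero hz
  have := key hz0 (not_ker_mem hz hz0)
  rwa [gv_eq' (g := g) (d0 := d0) hz0] at this

theorem point_trans {x y z : V1} (hx : ¬ Ker D x) (hz : ¬ Ker D z)
    (h : z ∈ Submodule.span K1 {x, y})
    (hy : ∀ (h0 : y ≠ 0), Projectivization.mk K1 y h0 ∈ D → g (Projectivization.mk K1 y h0) = gv g d0 x) :
    gv g d0 z = gv g d0 x := by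
  set T : Set (Projectivization K2 V2) := spanT (Submodule.span K2 {(gv g d0 x).rep}) with hT
  have hsub : ProjSubspace K2 T := spanT_subspace _
  have key : PtT D g T z := by
    refine ptT_closure hmor hsub (x := x) (y := y) ?_ ?_ h
    · intro h0 hD
      rw [hT, gv_eq' (g := g) (d0 := d0) h0]
      exact Submodule.mem_span_singleton_self _
    · intro h0 hD
      rw [hT, hy h0 hD]
      exact Submodule.mem_span_singleton_self _
  have hz0 := not_ker_nonzero hz
  have h5 := key hz0 (not_ker_mem hz hz0)
  rw [hT, gv_eq' (g := g) (d0 := d0) hz0] at h5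
  exact rep_mem_span_singleton_iff.1 h5

theorem gv_add_ker {x y : V1} (hx : ¬ Ker D x) (hy : Ker D y) :
    gv g d0 (x + y) = gv g d0 x :=
  point_trans hmor hx (not_ker_add_ker hmor hx hy)
    (Submodule.mem_span_pair.2 ⟨1, 1, by simp⟩)
    (fun h0 hD => absurd hD (hy h0))

theorem trio {x y : V1} (hx : ¬ Ker D x) (hy : ¬ Ker D y) (hxy : gv g d0 x ≠ gv g d0 y) :
    ¬ Ker D (x + y) ∧ gv g d0 (x + y) ≠ gv g d0 x ∧ gv g d0 (x + y) ≠ gv g d0 y := by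
  have hspan1 : x ∈ Submodule.span K1 {y, x + y} :=
    Submodule.mem_span_pair.2 ⟨-1, 1, by simp only [one_smul, neg_one_smul]; abel⟩
  have hspan2 : y ∈ Submodule.span K1 {x, x + y} :=
    Submodule.mem_span_pair.2 ⟨-1, 1, by simp only [one_smul, neg_one_smul]; abel⟩
  have hadd : ¬ Ker D (x + y) := by
    intro hk
    exact hxy (point_trans (d0 := d0) hmor hy hx hspan1 (fun h0 hD => absurd hD (hk h0)))
  refine ⟨hadd, ?_, ?_⟩
  · intro he
    exact hxy ((point_trans (d0 := d0) hmor hx hy hspan2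
      (fun h0 hD => (gv_eq' (g := g) (d0 := d0) h0).trans he)).symm)
  · intro he
    exact hxy (point_trans (d0 := d0) hmor hy hx hspan1
      (fun h0 hD => (gv_eq' (g := g) (d0 := d0) h0).trans he))

end

/-! ### Elementary linear independence helpers -/

section Ind

variable {K V : Type*} [DivisionRing K] [AddCommGroup V] [Module K V]

def Ind2 (K : Type*) [DivisionRing K] {V : Type*} [AddCommGroup V] [Module K V]
    (u v : V) : Prop := ∀ c d : K, c • u + d • v = 0 → c = 0 ∧ d = 0

def Ind3 (K : Type*) [DivisionRing K] {V : Type*} [AddCommGroup V] [Module K V]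
    (u v w : V) : Prop :=
  ∀ c d e : K, c • u + d • v + e • w = 0 → c = 0 ∧ d = 0 ∧ e = 0

theorem smul_zero_cancel {c : K} {v : V} (h : c • v = 0) (hv : v ≠ 0) : c = 0 := by
  by_contra hc
  exact hv (by rw [← one_smul K v, ← inv_mul_cancel₀ hc, ← smul_smul, h, smul_zero])

theorem smul_right_cancel {c d : K} {v : V} (h : c • v = d • v) (hv : v ≠ 0) : c = d := by
  have h1 : (c - d) • v = 0 := by rw [sub_smul, h, sub_self]
  have h2 := smul_zero_cancel h1 hv
  exact sub_eq_zero.1 h2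

theorem ind2_nonzero_left {u v : V} (h : Ind2 K u v) : u ≠ 0 := by
  intro h0
  exact one_ne_zero (h 1 0 (by simp [h0])).1

theorem ind2_nonzero_right {u v : V} (h : Ind2 K u v) : v ≠ 0 := by
  intro h0
  exact one_ne_zero (h 0 1 (by simp [h0])).2

theorem ind2_symm {u v : V} (h : Ind2 K u v) : Ind2 K v u := by
  intro c d hcd
  have := h d c (by rw [add_comm]; exact hcd)
  exact ⟨this.2, this.1⟩

theorem ind2_notMem_left {u v : V} (h : Ind2 K u v) :
    u ∉ Submodule.span K {v} := by
  intro hm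
  obtain ⟨c, hc⟩ := Submodule.mem_span_singleton.1 hm
  exact one_ne_zero (h 1 (-c) (by rw [one_smul, neg_smul, hc]; abel)).1

theorem ind2_of_not_mem {u v : V} (hu : u ≠ 0) (h : v ∉ Submodule.span K {u}) :
    Ind2 K u v := by
  intro c d hcd
  by_cases hd : d = 0
  · subst hd
    rw [zero_smul, add_zero] at hcd
    exact ⟨smul_zero_cancel hcd hu, rfl⟩
  · exfalso
    apply h
    refine Submodule.mem_span_singleton.2 ⟨d⁻¹ * (-c), ?_⟩
    have h2 : d • v + c • u = 0 := by rw [← hcd]; abel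
    have h3 : d • v = (-c) • u := by
      rw [neg_smul]
      exact eq_neg_of_add_eq_zero_left h2
    rw [← smul_smul, ← h3, smul_smul, inv_mul_cancel₀ hd, one_smul]

theorem ind2_smul_right {u v : V} (h : Ind2 K u v) {c : K} (hc : c ≠ 0) :
    Ind2 K u (c • v) := by
  intro s t hst
  rw [smul_smul] at hst
  obtain ⟨h1, h2⟩ := h s (t * c) hst
  exact ⟨h1, by rcases mul_eq_zero.1 h2 with h | h; exact h; exact absurd h hc⟩

theorem ind2_smul_left {u v : V} (h : Ind2 K u v) {c : K} (hc : c ≠ 0) :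
    Ind2 K (c • u) v :=
  ind2_symm (ind2_smul_right (ind2_symm h) hc)

theorem span_pair_le {s t : V} {W : Submodule K V} (hs : s ∈ W) (ht : t ∈ W) :
    Submodule.span K {s, t} ≤ W :=
  Submodule.span_le.2 (by rintro u (rfl | rfl); exacts [hs, by simpa using ht])

theorem ind3_of_ind2 {u v w : V} (h : Ind2 K u w) (hv : v ∉ Submodule.span K {u, w}) :
    Ind3 K u v w := by
  intro c d e hcde
  by_cases hd : d = 0
  · subst hd
    rw [zero_smul, add_zero] at hcde
    obtain ⟨h1, h2⟩ := h c e hcde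
    exact ⟨h1, rfl, h2⟩
  · exfalso
    apply hv
    refine Submodule.mem_span_pair.2 ⟨d⁻¹ * (-c), d⁻¹ * (-e), ?_⟩
    have h2 : d • v + (c • u + e • w) = 0 := by rw [← hcde]; abel
    have hdv : d • v = (-c) • u + (-e) • w := by
      rw [neg_smul, neg_smul, ← neg_add]
      exact eq_neg_of_add_eq_zero_left h2
    rw [← smul_smul, ← smul_smul, ← smul_add, ← hdv, smul_smul,
      inv_mul_cancel₀ hd, one_smul]

theorem ind3_of_ind2' {u v w : V} (h : Ind2 K u v) (hw : w ∉ Submodule.span K {u, v}) :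
    Ind3 K u v w := by
  intro c d e hcde
  by_cases he : e = 0
  · subst he
    rw [zero_smul, add_zero] at hcde
    obtain ⟨h1, h2⟩ := h c d hcde
    exact ⟨h1, h2, rfl⟩
  · exfalso
    apply hw
    refine Submodule.mem_span_pair.2 ⟨e⁻¹ * (-c), e⁻¹ * (-d), ?_⟩
    have h2 : e • w + (c • u + d • v) = 0 := by rw [← hcde]; abel
    have hdv : e • w = (-c) • u + (-d) • v := by
      rw [neg_smul, neg_smul, ← neg_add]
      exact eq_neg_of_add_eq_zero_left h2
    rw [← smul_smul, ← smul_smul, ← smul_add, ← hdv, smul_smul,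
      inv_mul_cancel₀ he, one_smul]

theorem ind3_notMem_mid {u v w : V} (h : Ind3 K u v w) :
    v ∉ Submodule.span K {u, w} := by
  intro hm
  obtain ⟨c, e, hce⟩ := Submodule.mem_span_pair.1 hm
  refine one_ne_zero (h (-c) 1 (-e) ?_).2.1
  rw [neg_smul, neg_smul, one_smul, ← hce]; abel

theorem ind3_swap12 {u v w : V} (h : Ind3 K u v w) : Ind3 K v u w := by
  intro c d e hcde
  obtain ⟨h1, h2, h3⟩ := h d c e (by rw [← hcde]; abel)
  exact ⟨h2, h1, h3⟩

theorem ind3_swap23 {u v w : V} (h : Ind3 K u v w) : Ind3 K u w v := by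
  intro c d e hcde
  obtain ⟨h1, h2, h3⟩ := h c e d (by rw [← hcde]; abel)
  exact ⟨h1, h3, h2⟩

theorem ind3_rot {u v w : V} (h : Ind3 K u v w) : Ind3 K v w u :=
  ind3_swap23 (ind3_swap12 h)

theorem ind3_ind2_12 {u v w : V} (h : Ind3 K u v w) : Ind2 K u v := by
  intro c d hcd
  obtain ⟨h1, h2, _⟩ := h c d 0 (by rw [zero_smul, add_zero]; exact hcd)
  exact ⟨h1, h2⟩

theorem ind3_ind2_13 {u v w : V} (h : Ind3 K u v w) : Ind2 K u w :=
  ind3_ind2_12 (ind3_swap23 h)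

theorem ind3_ind2_23 {u v w : V} (h : Ind3 K u v w) : Ind2 K v w :=
  ind3_ind2_12 (ind3_rot h)

theorem ind3_smul_mid {u v w : V} (h : Ind3 K u v w) {c : K} (hc : c ≠ 0) :
    Ind3 K u (c • v) w := by
  refine ind3_of_ind2 (ind3_ind2_13 h) ?_
  intro hm
  have h2 : v ∈ Submodule.span K {u, w} := by
    have := Submodule.smul_mem _ c⁻¹ hm
    rwa [smul_smul, inv_mul_cancel₀ hc, one_smul] at this
  exact ind3_notMem_mid h h2

/-- Three vectors in the span of a pair are never independent. -/
theorem not_ind3_of_mem_span_pair {s t x y z : V}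
    (hx : x ∈ Submodule.span K {s, t}) (hy : y ∈ Submodule.span K {s, t})
    (hz : z ∈ Submodule.span K {s, t}) (h : Ind3 K x y z) : False := by
  have hx0 : x ≠ 0 := ind2_nonzero_left (ind3_ind2_12 h)
  -- reduce to: span {s,t} ≤ span {x, y}, then z contradicts `ind3_not_mem_mid`-style
  have key : Submodule.span K {s, t} ≤ Submodule.span K {x, y} := by
    obtain ⟨x1, x2, hxe⟩ := Submodule.mem_span_pair.1 hx
    by_cases hx1 : x1 = 0
    · -- x = x2 • t, x2 ≠ 0, hence t ∈ span {x}
      subst hx1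
      rw [zero_smul, zero_add] at hxe
      have hx2 : x2 ≠ 0 := fun h0 => hx0 (by rw [← hxe, h0, zero_smul])
      have ht : t ∈ Submodule.span K {x, s} := Submodule.mem_span_pair.2
        ⟨x2⁻¹, 0, by rw [zero_smul, add_zero, ← hxe, smul_smul, inv_mul_cancel₀ hx2, one_smul]⟩
      have hst : Submodule.span K {s, t} ≤ Submodule.span K {x, s} :=
        span_pair_le (Submodule.subset_span (by right; rfl)) ht
      -- now y ∈ span {x, s} with nonzero s-coefficient
      obtain ⟨y1, y2, hye⟩ := Submodule.mem_span_pair.1 (hst hy)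
      have hy2 : y2 ≠ 0 := by
        intro h0
        rw [h0, zero_smul, add_zero] at hye
        exact one_ne_zero ((ind3_ind2_12 h) (-y1) 1
          (by rw [neg_smul, one_smul, ← hye]; abel)).2
      have hs : s ∈ Submodule.span K {x, y} := by
        refine Submodule.mem_span_pair.2 ⟨y2⁻¹ * (-y1), y2⁻¹, ?_⟩
        rw [← smul_smul, ← smul_add]
        have h3 : (-y1) • x + y = y2 • s := by rw [neg_smul, ← hye]; abel
        rw [h3, smul_smul, inv_mul_cancel₀ hy2, one_smul]
      refine le_trans hst (span_pair_le (Submodule.subset_span (by left; rfl)) hs)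
    · -- x1 ≠ 0, hence s ∈ span {x, t}
      have hs : s ∈ Submodule.span K {x, t} := by
        refine Submodule.mem_span_pair.2 ⟨x1⁻¹, x1⁻¹ * (-x2), ?_⟩
        rw [← smul_smul, ← smul_add]
        have h3 : x + (-x2) • t = x1 • s := by rw [neg_smul, ← hxe]; abel
        rw [h3, smul_smul, inv_mul_cancel₀ hx1, one_smul]
      have hst : Submodule.span K {s, t} ≤ Submodule.span K {x, t} :=
        span_pair_le hs (Submodule.subset_span (by right; rfl))
      obtain ⟨y1, y2, hye⟩ := Submodule.mem_span_pair.1 (hst hy)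
      have hy2 : y2 ≠ 0 := by
        intro h0
        rw [h0, zero_smul, add_zero] at hye
        exact one_ne_zero ((ind3_ind2_12 h) (-y1) 1
          (by rw [neg_smul, one_smul, ← hye]; abel)).2
      have ht : t ∈ Submodule.span K {x, y} := by
        refine Submodule.mem_span_pair.2 ⟨y2⁻¹ * (-y1), y2⁻¹, ?_⟩
        rw [← smul_smul, ← smul_add]
        have h3 : (-y1) • x + y = y2 • t := by rw [neg_smul, ← hye]; abel
        rw [h3, smul_smul, inv_mul_cancel₀ hy2, one_smul]
      refine le_trans hst (span_pair_le ?_ ht)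
      exact Submodule.subset_span (by left; rfl)
  exact ind3_notMem_mid (ind3_swap23 h) (key hz)

theorem ind3_ind2_add12 {u v w : V} (h : Ind3 K u v w) : Ind2 K (u + v) w := by
  intro c d hcd
  obtain ⟨h1, _, h3⟩ := h c c d (by rw [← hcd, smul_add])
  exact ⟨h1, h3⟩

theorem ind3_ind2_add23 {u v w : V} (h : Ind3 K u v w) : Ind2 K u (v + w) := by
  intro c d hcd
  obtain ⟨h1, h2, _⟩ := h c d d (by rw [← hcd, smul_add]; abel)
  exact ⟨h1, h2⟩

theorem ind3_sum_ne {u v w : V} (h : Ind3 K u v w) : u + v + w ≠ 0 := by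
  intro h0
  exact one_ne_zero (h 1 1 1 (by rw [one_smul, one_smul, one_smul]; exact h0)).1

end Ind


/-! ### Bridging projective points and vectors -/

theorem mk_eq_mk_of_eq {v w : V2} (hv : v ≠ 0) (h : v = w) :
    Projectivization.mk K2 v hv = Projectivization.mk K2 w (h ▸ hv) := by
  subst h; rfl

theorem mk_smul_eq {w : V2} (hw : w ≠ 0) {c : K2} (hc : c ≠ 0) :
    Projectivization.mk K2 (c • w) (smul_ne_zero hc hw) = Projectivization.mk K2 w hw :=
  (Projectivization.mk_eq_mk_iff' K2 _ _ _ hw).2 ⟨c, rfl⟩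

theorem rep_of_mk {p : Projectivization K2 V2} {w : V2} {hw : w ≠ 0}
    (h : p = Projectivization.mk K2 w hw) : ∃ c : K2, c ≠ 0 ∧ p.rep = c • w := by
  obtain ⟨u, hu⟩ := Projectivization.exists_smul_eq_mk_rep K2 w hw
  rw [Units.smul_def] at hu
  refine ⟨u, Units.ne_zero u, ?_⟩
  rw [h, ← hu]

theorem ind2_of_ne {u w : V2} (hu : u ≠ 0) (hw : w ≠ 0)
    (h : Projectivization.mk K2 u hu ≠ Projectivization.mk K2 w hw) : Ind2 K2 u w := by
  refine ind2_of_not_mem hu ?_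
  intro hm
  obtain ⟨c, hc⟩ := Submodule.mem_span_singleton.1 hm
  have hc0 : c ≠ 0 := fun h0 => hw (by rw [← hc, h0, zero_smul])
  exact h ((mk_eq_mk_of_eq hw hc.symm).trans (mk_smul_eq hu hc0)).symm

theorem ne_of_ind2 {u w : V2} (h : Ind2 K2 u w) (hu : u ≠ 0) (hw : w ≠ 0) :
    Projectivization.mk K2 u hu ≠ Projectivization.mk K2 w hw := by
  intro he
  obtain ⟨c, hc⟩ := (Projectivization.mk_eq_mk_iff' K2 _ _ hu hw).1 he
  exact one_ne_zero (h 1 (-c) (by rw [one_smul, neg_smul, ← hc]; abel)).1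

/-! ### The chart construction -/

/-- The chart condition at base `(a, α)`:  `ξ` represents `g x` and `α + ξ`
represents `g (a + x)`. -/
def ChartCond (g : Projectivization K1 V1 → Projectivization K2 V2)
    (d0 : Projectivization K2 V2) (a : V1) (α : V2) (x : V1) (ξ : V2) : Prop :=
  ∃ hξ : ξ ≠ 0, gv g d0 x = Projectivization.mk K2 ξ hξ ∧
    ∃ hs : α + ξ ≠ 0, gv g d0 (a + x) = Projectivization.mk K2 (α + ξ) hs

open scoped Classical in
noncomputable def chartF (g : Projectivization K1 V1 → Projectivization K2 V2)
    (d0 : Projectivization K2 V2) (a : V1) (α : V2) (x : V1) : V2 :=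
  if h : ∃ ξ, ChartCond g d0 a α x ξ then h.choose else 0

section Chart

variable (hmor : ∀ T : Set (Projectivization K2 V2), ProjSubspace K2 T →
      ProjSubspace K1 (Dᶜ ∪ {p ∈ D | g p ∈ T}))
  {a : V1} {α : V2} {hα0 : α ≠ 0}
  (ha : ¬ Ker D a) (hα : gv g d0 a = Projectivization.mk K2 α hα0)

include hmor ha hα

theorem chart_exists {x : V1} (hx : ¬ Ker D x) (hxa : gv g d0 x ≠ gv g d0 a) :
    ∃ ξ, ChartCond g d0 a α x ξ := by
  obtain ⟨hax, h1, h2⟩ := trio (d0 := d0) hmor ha hx (Ne.symm hxa)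
  have hspan : a + x ∈ Submodule.span K1 {a, x} :=
    Submodule.mem_span_pair.2 ⟨1, 1, by rw [one_smul, one_smul]⟩
  have hcol := collinear (d0 := d0) hmor ha hx hax hspan
  set u := (gv g d0 x).rep with hu
  set w0 := (gv g d0 (a + x)).rep with hw0
  obtain ⟨c, hc0, hcα⟩ := rep_of_mk hα
  obtain ⟨s, t, hst⟩ := Submodule.mem_span_pair.1 hcol
  rw [hcα, smul_smul] at hst
  set s' := s * c with hs'def
  have hw00 : w0 ≠ 0 := Projectivization.rep_nonzero _
  have hu0 : u ≠ 0 := Projectivization.rep_nonzero _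
  have e1 : gv g d0 (a + x) = Projectivization.mk K2 w0 hw00 :=
    (Projectivization.mk_rep _).symm
  have e4 : Projectivization.mk K2 u hu0 = gv g d0 x := Projectivization.mk_rep _
  have hs' : s' ≠ 0 := by
    intro h0
    rw [h0, zero_smul, zero_add] at hst
    have ht0 : t ≠ 0 := fun h0' => hw00 (by rw [← hst, h0', zero_smul])
    refine h2 (e1.trans ?_)
    exact ((mk_eq_mk_of_eq hw00 hst.symm).trans ((mk_smul_eq hu0 ht0).trans e4))
  have ht : t ≠ 0 := by
    intro h0
    rw [h0, zero_smul, add_zero] at hst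
    refine h1 (e1.trans ?_)
    exact ((mk_eq_mk_of_eq hw00 hst.symm).trans ((mk_smul_eq hα0 hs').trans hα.symm))
  have hmul : s'⁻¹ * t ≠ 0 := mul_ne_zero (inv_ne_zero hs') ht
  refine ⟨(s'⁻¹ * t) • u, smul_ne_zero hmul hu0, ?_, ?_⟩
  · have e5 : Projectivization.mk K2 ((s'⁻¹ * t) • u) (smul_ne_zero hmul hu0) =
        Projectivization.mk K2 u hu0 := mk_smul_eq hu0 hmul
    exact e4.symm.trans e5.symm
  · have hkey : α + (s'⁻¹ * t) • u = s'⁻¹ • w0 := by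
      rw [← hst, smul_add, smul_smul, smul_smul, inv_mul_cancel₀ hs', one_smul]
    have hne : α + (s'⁻¹ * t) • u ≠ 0 := by
      rw [hkey]
      exact smul_ne_zero (inv_ne_zero hs') hw00
    refine ⟨hne, ?_⟩
    have e6 : Projectivization.mk K2 (s'⁻¹ • w0) (smul_ne_zero (inv_ne_zero hs') hw00) =
        Projectivization.mk K2 w0 hw00 := mk_smul_eq hw00 (inv_ne_zero hs')
    have e7 : Projectivization.mk K2 (α + (s'⁻¹ * t) • u) hne =
        Projectivization.mk K2 (s'⁻¹ • w0) (smul_ne_zero (inv_ne_zero hs') hw00) := by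
      congr 1
    exact e1.trans (e6.symm.trans e7.symm)

theorem chart_unique {x : V1} (hx : ¬ Ker D x) (hxa : gv g d0 x ≠ gv g d0 a)
    {ξ ξ' : V2} (h1 : ChartCond g d0 a α x ξ) (h2 : ChartCond g d0 a α x ξ') :
    ξ = ξ' := by
  obtain ⟨hξ, hξ1, hξs, hξ2⟩ := h1
  obtain ⟨hξ', hξ1', hξs', hξ2'⟩ := h2
  obtain ⟨c, hc⟩ := (Projectivization.mk_eq_mk_iff' K2 _ _ hξ hξ').1 (hξ1.symm.trans hξ1')
  obtain ⟨ν, hν⟩ := (Projectivization.mk_eq_mk_iff' K2 _ _ hξs hξs').1 (hξ2.symm.trans hξ2')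
  have hind : Ind2 K2 α ξ' := by
    refine ind2_of_ne hα0 hξ' ?_
    intro he
    exact hxa (hξ1'.trans (he.symm.trans hα.symm))
  have hν' : ν • α + ν • ξ' = α + c • ξ' := by
    rw [← smul_add, hν, hc]
  have h0 : (1 - ν) • α + (c - ν) • ξ' = (α + c • ξ') - (ν • α + ν • ξ') := by
    rw [sub_smul, sub_smul, one_smul]; abel
  rw [hν', sub_self] at h0
  obtain ⟨e1, e2⟩ := hind _ _ h0
  have hν1 : ν = 1 := by rw [← sub_eq_zero]; rw [sub_eq_zero] at e1 ⊢; exact e1.symm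
  have hc1 : c = 1 := by rw [← sub_eq_zero]; rwa [hν1] at e2
  rw [← hc, hc1, one_smul]

theorem chartF_cond {x : V1} (hx : ¬ Ker D x) (hxa : gv g d0 x ≠ gv g d0 a) :
    ChartCond g d0 a α x (chartF g d0 a α x) := by
  rw [chartF, dif_pos (chart_exists (d0 := d0) hmor ha hα hx hxa)]
  exact (chart_exists (d0 := d0) hmor ha hα hx hxa).choose_spec

theorem chartF_eq {x : V1} (hx : ¬ Ker D x) (hxa : gv g d0 x ≠ gv g d0 a)
    {ξ : V2} (h : ChartCond g d0 a α x ξ) : chartF g d0 a α x = ξ :=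
  chart_unique (d0 := d0) hmor ha hα hx hxa (chartF_cond hmor ha hα hx hxa) h

theorem chartF_ne {x : V1} (hx : ¬ Ker D x) (hxa : gv g d0 x ≠ gv g d0 a) :
    chartF g d0 a α x ≠ 0 :=
  (chartF_cond hmor ha hα hx hxa).1

theorem chartF_rep {x : V1} (hx : ¬ Ker D x) (hxa : gv g d0 x ≠ gv g d0 a) :
    gv g d0 x = Projectivization.mk K2 (chartF g d0 a α x)
      (chartF_ne hmor ha hα hx hxa) := by
  obtain ⟨h1, h2, h3⟩ := chartF_cond (d0 := d0) hmor ha hα hx hxa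
  exact h2

theorem chartF_rep_add {x : V1} (hx : ¬ Ker D x) (hxa : gv g d0 x ≠ gv g d0 a) :
    ∃ hs : α + chartF g d0 a α x ≠ 0,
      gv g d0 (a + x) = Projectivization.mk K2 (α + chartF g d0 a α x) hs := by
  obtain ⟨h1, h2, h3⟩ := chartF_cond (d0 := d0) hmor ha hα hx hxa
  exact h3

end Chart

section Compat

variable (hmor : ∀ T : Set (Projectivization K2 V2), ProjSubspace K2 T →
      ProjSubspace K1 (Dᶜ ∪ {p ∈ D | g p ∈ T}))
  {a : V1} {α : V2} {hα0 : α ≠ 0}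
  (ha : ¬ Ker D a) (hα : gv g d0 a = Projectivization.mk K2 α hα0)

include hmor ha hα

/-- Non-planar additivity in a single chart. -/
theorem chart_add {x y : V1} (hx : ¬ Ker D x) (hxa : gv g d0 x ≠ gv g d0 a)
    (hy : ¬ Ker D y) (hya : gv g d0 y ≠ gv g d0 a)
    (hind : Ind3 K2 α (chartF g d0 a α x) (chartF g d0 a α y)) :
    ¬ Ker D (x + y) ∧ gv g d0 (x + y) ≠ gv g d0 a ∧
      chartF g d0 a α (x + y) = chartF g d0 a α x + chartF g d0 a α y := by
  set fx := chartF g d0 a α x with hfx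
  set fy := chartF g d0 a α y with hfy
  have hfx0 : fx ≠ 0 := chartF_ne hmor ha hα hx hxa
  have hfy0 : fy ≠ 0 := chartF_ne hmor ha hα hy hya
  have hrx : gv g d0 x = Projectivization.mk K2 fx hfx0 := chartF_rep hmor ha hα hx hxa
  have hry : gv g d0 y = Projectivization.mk K2 fy hfy0 := chartF_rep hmor ha hα hy hya
  obtain ⟨hsx, hrax⟩ := chartF_rep_add hmor ha hα hx hxa
  obtain ⟨hsy, hray⟩ := chartF_rep_add hmor ha hα hy hya
  have hxy : gv g d0 x ≠ gv g d0 y := by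
    rw [hrx, hry]
    exact ne_of_ind2 (ind3_ind2_23 hind) hfx0 hfy0
  obtain ⟨hkxy, hxyx, hxyy⟩ := trio (d0 := d0) hmor hx hy hxy
  -- the point a + x + y
  have haxy_ne : gv g d0 (a + x) ≠ gv g d0 y := by
    rw [hrax, hry]
    exact ne_of_ind2 (ind3_ind2_add12 hind) hsx hfy0
  have hayx_ne : gv g d0 (a + y) ≠ gv g d0 x := by
    rw [hray, hrx]
    exact ne_of_ind2 (ind3_ind2_add12 (ind3_swap23 hind)) hsy hfx0
  obtain ⟨hkax, _, _⟩ := trio (d0 := d0) hmor ha hx (Ne.symm hxa)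
  obtain ⟨hkay, _, _⟩ := trio (d0 := d0) hmor ha hy (Ne.symm hya)
  obtain ⟨hkaxy, _, _⟩ := trio (d0 := d0) hmor hkax hy haxy_ne
  -- rep of gv (a + x + y) lies in two planes
  have hc1 := collinear (d0 := d0) hmor hkax hy hkaxy
    (Submodule.mem_span_pair.2 ⟨1, 1, by rw [one_smul, one_smul]⟩)
  have hc2 : ((gv g d0 (a + x + y)).rep) ∈
      Submodule.span K2 {(gv g d0 (a + y)).rep, (gv g d0 x).rep} := by
    have hv : a + x + y ∈ Submodule.span K1 {a + y, x} :=
      Submodule.mem_span_pair.2 ⟨1, 1, by rw [one_smul, one_smul]; abel⟩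
    exact collinear (d0 := d0) hmor hkay hx hkaxy hv
  set r1 := (gv g d0 (a + x + y)).rep with hr1
  have hr10 : r1 ≠ 0 := Projectivization.rep_nonzero _
  obtain ⟨c1, hc10, hc1e⟩ := rep_of_mk hrax
  obtain ⟨c2, hc20, hc2e⟩ := rep_of_mk hry
  obtain ⟨c3, hc30, hc3e⟩ := rep_of_mk hray
  obtain ⟨c4, hc40, hc4e⟩ := rep_of_mk hrx
  obtain ⟨s, t, hst⟩ := Submodule.mem_span_pair.1 hc1
  obtain ⟨s', t', hst'⟩ := Submodule.mem_span_pair.1 hc2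
  rw [hc1e, hc2e, smul_smul, smul_smul] at hst
  rw [hc3e, hc4e, smul_smul, smul_smul] at hst'
  set s1 := s * c1
  set t1 := t * c2
  set s2 := s' * c3
  set t2 := t' * c4
  have expand1 : s1 • α + s1 • fx + t1 • fy = r1 := by rw [← hst, smul_add]
  have expand2 : s2 • α + t2 • fx + s2 • fy = r1 := by rw [← hst', smul_add]; abel
  have h0 : (s1 - s2) • α + (s1 - t2) • fx + (t1 - s2) • fy =
      (s1 • α + s1 • fx + t1 • fy) - (s2 • α + t2 • fx + s2 • fy) := by
    rw [sub_smul, sub_smul, sub_smul]; abel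
  rw [expand1, expand2, sub_self] at h0
  obtain ⟨e1, e2, e3⟩ := hind _ _ _ h0
  have hs1t2 : t2 = s1 := (sub_eq_zero.1 e2).symm
  have hs1s2 : s2 = s1 := (sub_eq_zero.1 e1).symm
  have ht1s2 : t1 = s2 := sub_eq_zero.1 e3
  have hr1sum : r1 = s1 • (α + fx + fy) := by
    rw [smul_add, smul_add, ← expand1, ht1s2, hs1s2]
  have hs10 : s1 ≠ 0 := by
    intro h0'
    exact hr10 (by rw [hr1sum, h0', zero_smul])
  have hsum0 : α + fx + fy ≠ 0 := ind3_sum_ne hind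
  have hgaxy : gv g d0 (a + x + y) = Projectivization.mk K2 (α + fx + fy) hsum0 := by
    have e1' : gv g d0 (a + x + y) = Projectivization.mk K2 r1 hr10 :=
      (Projectivization.mk_rep _).symm
    refine e1'.trans ?_
    refine (mk_eq_mk_of_eq hr10 hr1sum).trans ?_
    exact mk_smul_eq hsum0 hs10
  -- now the point x + y
  have hd1 := collinear (d0 := d0) hmor hx hy hkxy
    (Submodule.mem_span_pair.2 ⟨1, 1, by rw [one_smul, one_smul]⟩)
  have hd2 : ((gv g d0 (x + y)).rep) ∈
      Submodule.span K2 {(gv g d0 a).rep, (gv g d0 (a + x + y)).rep} := by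
    have hv : x + y ∈ Submodule.span K1 {a, a + x + y} :=
      Submodule.mem_span_pair.2 ⟨-1, 1, by rw [one_smul, neg_one_smul]; abel⟩
    exact collinear (d0 := d0) hmor ha hkaxy hkxy hv
  set r2 := (gv g d0 (x + y)).rep with hr2
  have hr20 : r2 ≠ 0 := Projectivization.rep_nonzero _
  obtain ⟨c5, hc50, hc5e⟩ := rep_of_mk hα
  obtain ⟨c6, hc60, hc6e⟩ := rep_of_mk hgaxy
  obtain ⟨s'', t'', hst''⟩ := Submodule.mem_span_pair.1 hd2
  obtain ⟨u'', v'', huv''⟩ := Submodule.mem_span_pair.1 hd1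
  rw [hc5e, hc6e, smul_smul, smul_smul] at hst''
  rw [hc4e, hc2e, smul_smul, smul_smul] at huv''
  set s3 := s'' * c5
  set t3 := t'' * c6
  set s4 := u'' * c4
  set t4 := v'' * c2
  have expand3 : (s3 + t3) • α + t3 • fx + t3 • fy = r2 := by
    rw [← hst'', smul_add, smul_add, add_smul]; abel
  have expand4 : s4 • fx + t4 • fy = r2 := by rw [← huv'']
  have h0' : (s3 + t3) • α + (t3 - s4) • fx + (t3 - t4) • fy =
      ((s3 + t3) • α + t3 • fx + t3 • fy) - (s4 • fx + t4 • fy) := by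
    rw [sub_smul, sub_smul]; abel
  rw [expand3, expand4, sub_self] at h0'
  obtain ⟨e1', e2', e3'⟩ := hind _ _ _ h0'
  have hfxy0 : fx + fy ≠ 0 := ind2_nonzero_right (ind3_ind2_add23 hind)
  have hr2sum : r2 = t3 • (fx + fy) := by
    rw [smul_add, ← expand4, (sub_eq_zero.1 e2').symm, (sub_eq_zero.1 e3').symm]
  have ht30 : t3 ≠ 0 := fun h0'' => hr20 (by rw [hr2sum, h0'', zero_smul])
  have hgxy : gv g d0 (x + y) = Projectivization.mk K2 (fx + fy) hfxy0 := by
    have e1'' : gv g d0 (x + y) = Projectivization.mk K2 r2 hr20 :=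
      (Projectivization.mk_rep _).symm
    refine e1''.trans ?_
    refine (mk_eq_mk_of_eq hr20 hr2sum).trans ?_
    exact mk_smul_eq hfxy0 ht30
  have hgxya : gv g d0 (x + y) ≠ gv g d0 a := by
    rw [hgxy, hα]
    exact ne_of_ind2 (ind2_symm (ind3_ind2_add23 hind)) hfxy0 hα0
  refine ⟨hkxy, hgxya, ?_⟩
  refine chartF_eq hmor ha hα hkxy hgxya ?_
  refine ⟨hfxy0, hgxy, ?_⟩
  have hassoc : α + (fx + fy) = α + fx + fy := by abel
  have hne : α + (fx + fy) ≠ 0 := by rw [hassoc]; exact hsum0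
  refine ⟨hne, ?_⟩
  have hvec : a + (x + y) = a + x + y := by abel
  rw [hvec]
  refine hgaxy.trans ?_
  exact (mk_eq_mk_of_eq hne hassoc).symm

theorem chart_base_swap {b : V1} (hb : ¬ Ker D b) (hba : gv g d0 b ≠ gv g d0 a)
    {β : V2} (hβ : β = chartF g d0 a α b) {hβ0 : β ≠ 0}
    (hgb : gv g d0 b = Projectivization.mk K2 β hβ0) :
    chartF g d0 b β a = α := by
  obtain ⟨hs, hrep⟩ := chartF_rep_add (d0 := d0) hmor ha hα hb hba
  refine chartF_eq hmor hb hgb ha hba.symm ?_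
  refine ⟨hα0, hα, ?_⟩
  have hsum : α + chartF g d0 a α b = β + α := by rw [← hβ]; abel
  have hne : β + α ≠ 0 := by rw [← hsum]; exact hs
  refine ⟨hne, ?_⟩
  have hvec : b + a = a + b := by abel
  rw [hvec]
  exact hrep.trans (mk_eq_mk_of_eq hs hsum)

theorem compat_easy {b : V1} (hb : ¬ Ker D b) (hba : gv g d0 b ≠ gv g d0 a)
    {β : V2} (hβ : β = chartF g d0 a α b) {hβ0 : β ≠ 0}
    (hgb : gv g d0 b = Projectivization.mk K2 β hβ0)
    {x : V1} (hx : ¬ Ker D x) (hxa : gv g d0 x ≠ gv g d0 a) (hxb : gv g d0 x ≠ gv g d0 b)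
    (hind : Ind3 K2 α (chartF g d0 a α x) β) :
    chartF g d0 b β x = chartF g d0 a α x := by
  set fx := chartF g d0 a α x with hfx
  have hfx0 : fx ≠ 0 := chartF_ne hmor ha hα hx hxa
  have hind' : Ind3 K2 α (chartF g d0 a α b) fx := by
    rw [← hβ]
    exact ind3_swap23 hind
  obtain ⟨hkbx, hbxa, hsum⟩ := chart_add (d0 := d0) hmor ha hα hb hba hx hxa hind'
  have vβx : chartF g d0 a α (b + x) = β + fx := by rw [hsum, ← hβ]
  have hne : β + fx ≠ 0 := by
    rw [← vβx]
    exact chartF_ne hmor ha hα hkbx hbxa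
  refine chartF_eq hmor hb hgb hx hxb ?_
  refine ⟨hfx0, chartF_rep hmor ha hα hx hxa, hne, ?_⟩
  exact (chartF_rep hmor ha hα hkbx hbxa).trans
    (mk_eq_mk_of_eq (chartF_ne hmor ha hα hkbx hbxa) vβx)

theorem compat_full {b : V1} (hb : ¬ Ker D b) (hba : gv g d0 b ≠ gv g d0 a)
    {β : V2} (hβ : β = chartF g d0 a α b) {hβ0 : β ≠ 0}
    (hgb : gv g d0 b = Projectivization.mk K2 β hβ0)
    (hout2 : ∀ s t : V2, ∃ e, ¬ Ker D e ∧ (gv g d0 e).rep ∉ Submodule.span K2 {s, t})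
    {x : V1} (hx : ¬ Ker D x) (hxa : gv g d0 x ≠ gv g d0 a) (hxb : gv g d0 x ≠ gv g d0 b) :
    chartF g d0 b β x = chartF g d0 a α x := by
  set fx := chartF g d0 a α x with hfx
  have hfx0 : fx ≠ 0 := chartF_ne hmor ha hα hx hxa
  have hrx : gv g d0 x = Projectivization.mk K2 fx hfx0 := chartF_rep hmor ha hα hx hxa
  have hαβ : Ind2 K2 α β := by
    refine ind2_of_ne hα0 hβ0 ?_
    intro he
    exact hba (hgb.trans (he.symm.trans hα.symm))
  by_cases hplane : Ind3 K2 α fx β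
  · exact compat_easy hmor ha hα hb hba hβ hgb hx hxa hxb hplane
  · have hfxmem : fx ∈ Submodule.span K2 {α, β} := by
      by_contra hmem
      exact hplane (ind3_of_ind2 hαβ hmem)
    obtain ⟨e, he, hγ0⟩ := hout2 α β
    set γ0 := (gv g d0 e).rep with hγ0def
    have hγ00 : γ0 ≠ 0 := Projectivization.rep_nonzero _
    have hea : gv g d0 e ≠ gv g d0 a := by
      intro h
      obtain ⟨c, hc0, hce⟩ := rep_of_mk (h.trans hα)
      refine hγ0 ?_
      rw [← hγ0def] at hce
      rw [hce]
      exact Submodule.smul_mem _ c (Submodule.subset_span (Or.inl rfl))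
    have heb : gv g d0 e ≠ gv g d0 b := by
      intro h
      obtain ⟨c, hc0, hce⟩ := rep_of_mk (h.trans hgb)
      refine hγ0 ?_
      rw [← hγ0def] at hce
      rw [hce]
      exact Submodule.smul_mem _ c (Submodule.subset_span (Or.inr rfl))
    set γ := chartF g d0 a α e with hγdef
    have hγne : γ ≠ 0 := chartF_ne hmor ha hα he hea
    have hre : gv g d0 e = Projectivization.mk K2 γ hγne := chartF_rep hmor ha hα he hea
    obtain ⟨cγ, hcγ0, hcγ⟩ := rep_of_mk hre
    have hγmem : γ ∉ Submodule.span K2 {α, β} := by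
      intro hmem
      refine hγ0 ?_
      rw [← hγ0def] at hcγ
      rw [hcγ]
      exact Submodule.smul_mem _ cγ hmem
    -- step 1 : chartF b β e = γ
    have heq1 : chartF g d0 b β e = γ := by
      refine compat_easy hmor ha hα hb hba hβ hgb he hea heb ?_
      rw [← hγdef]
      exact ind3_of_ind2 hαβ hγmem
    -- gv x ≠ gv e
    have hxe : gv g d0 x ≠ gv g d0 e := by
      intro h
      obtain ⟨c, hc0, hce⟩ := rep_of_mk (h.symm.trans hrx)
      refine hγ0 ?_
      rw [← hγ0def] at hce
      rw [hce]
      exact Submodule.smul_mem _ c hfxmem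
    -- step 2 : chartF e γ x = chartF a α x
    have hαfx : Ind2 K2 α fx := by
      refine ind2_of_ne hα0 hfx0 ?_
      intro h
      exact hxa (hrx.trans (h.symm.trans hα.symm))
    have hspanle : Submodule.span K2 {α, fx} ≤ Submodule.span K2 {α, β} :=
      span_pair_le (Submodule.subset_span (Or.inl rfl)) hfxmem
    have heq2 : chartF g d0 e γ x = chartF g d0 a α x := by
      refine compat_easy hmor ha hα he hea hγdef hre hx hxa hxe ?_
      refine ind3_of_ind2' hαfx ?_
      intro hmem
      exact hγmem (hspanle hmem)
    -- step 3 : chartF e γ x = chartF b β x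
    have hβx0 : chartF g d0 b β x ≠ 0 := chartF_ne hmor hb hgb hx hxb
    have hrbx : gv g d0 x = Projectivization.mk K2 (chartF g d0 b β x) hβx0 :=
      chartF_rep hmor hb hgb hx hxb
    obtain ⟨c7, hc7⟩ := (Projectivization.mk_eq_mk_iff' K2 _ _ hβx0 hfx0).1
      (hrbx.symm.trans hrx)
    have hc70 : c7 ≠ 0 := fun h0 => hβx0 (by rw [← hc7, h0, zero_smul])
    have heq3 : chartF g d0 e γ x = chartF g d0 b β x := by
      refine compat_easy hmor hb hgb he heb heq1.symm hre hx hxb hxe ?_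
      -- Ind3 β (chartF b β x) γ
      refine ind3_of_ind2 (ind2_symm (ind3_ind2_23 (ind3_of_ind2 hαβ hγmem))) ?_
      intro hmem
      -- chartF b β x ∈ span {β, γ} leads to a contradiction
      obtain ⟨c10, c11, hc1011⟩ := Submodule.mem_span_pair.1 hmem
      obtain ⟨c8, c9, hc89⟩ := Submodule.mem_span_pair.1 hfxmem
      -- fx = c8 α + c9 β  and  c7 • fx = c10 β + c11 γ
      have hind3 : Ind3 K2 α β γ := ind3_swap23 (ind3_of_ind2 hαβ hγmem)
      have hval : c10 • β + c11 • γ = c7 • fx := hc1011.trans hc7.symm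
      have hval2 : c7 • fx = (c7 * c8) • α + (c7 * c9) • β := by
        rw [← hc89, smul_add, smul_smul, smul_smul]
      have hcomb : ((c7 * c8)) • α + ((c7 * c9) - c10) • β + (- c11) • γ = 0 := by
        have hsplit : ((c7 * c8)) • α + ((c7 * c9) - c10) • β + (- c11) • γ =
            ((c7 * c8) • α + (c7 * c9) • β) - (c10 • β + c11 • γ) := by
          rw [sub_smul, neg_smul]; abel
        rw [hsplit, ← hval2, hval, sub_self]
      obtain ⟨e1, e2, e3⟩ := hind3 _ _ _ hcomb
      have hc80 : c8 = 0 := by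
        rcases mul_eq_zero.1 e1 with h | h
        · exact absurd h hc70
        · exact h
      -- then fx = c9 • β, so gv x = gv b, contradiction
      rw [hc80, zero_smul, zero_add] at hc89
      have hc90 : c9 ≠ 0 := fun h0 => hfx0 (by rw [← hc89, h0, zero_smul])
      refine hxb ?_
      rw [hrx, hgb]
      exact ((mk_eq_mk_of_eq hfx0 hc89.symm).trans (mk_smul_eq hβ0 hc90))
    rw [← heq3, heq2]

theorem chart_ker_shift {x y : V1} (hk : Ker D x) (hy : ¬ Ker D y)
    (hya : gv g d0 y ≠ gv g d0 a) :
    ¬ Ker D (x + y) ∧ gv g d0 (x + y) ≠ gv g d0 a ∧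
      chartF g d0 a α (x + y) = chartF g d0 a α y := by
  have hk1 : ¬ Ker D (x + y) := by
    have h := not_ker_add_ker hmor hy hk
    rwa [add_comm y x] at h
  have hgv : gv g d0 (x + y) = gv g d0 y := by
    have h := gv_add_ker (d0 := d0) hmor hy hk
    rwa [add_comm y x] at h
  have hya2 : gv g d0 (x + y) ≠ gv g d0 a := by rw [hgv]; exact hya
  refine ⟨hk1, hya2, ?_⟩
  refine chartF_eq hmor ha hα hk1 hya2 ?_
  refine ⟨chartF_ne hmor ha hα hy hya, hgv.trans (chartF_rep hmor ha hα hy hya), ?_⟩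
  obtain ⟨hs, hrep⟩ := chartF_rep_add (d0 := d0) hmor ha hα hy hya
  refine ⟨hs, ?_⟩
  obtain ⟨hkay, _, _⟩ := trio (d0 := d0) hmor ha hy (Ne.symm hya)
  have hveq : a + (x + y) = (a + y) + x := by abel
  rw [hveq]
  have h2 := gv_add_ker (d0 := d0) hmor hkay hk
  exact h2.trans hrep

end Compat

section Full

open scoped Classical in
/-- The glued semilinear map candidate, combining the charts at `a` and at `b`. -/
noncomputable def fullF (D : Set (Projectivization K1 V1))
    (g : Projectivization K1 V1 → Projectivization K2 V2) (d0 : Projectivization K2 V2)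
    (a : V1) (α : V2) (b : V1) (β : V2) (x : V1) : V2 :=
  if ¬ Ker D x ∧ gv g d0 x ≠ gv g d0 a then chartF g d0 a α x
  else if ¬ Ker D x ∧ gv g d0 x ≠ gv g d0 b then chartF g d0 b β x
  else 0

variable (hmor : ∀ T : Set (Projectivization K2 V2), ProjSubspace K2 T →
      ProjSubspace K1 (Dᶜ ∪ {p ∈ D | g p ∈ T}))
  {a : V1} {α : V2} {hα0 : α ≠ 0}
  (ha : ¬ Ker D a) (hα : gv g d0 a = Projectivization.mk K2 α hα0)
  {b : V1} (hb : ¬ Ker D b) (hba : gv g d0 b ≠ gv g d0 a)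
  {β : V2} (hβ : β = chartF g d0 a α b)
  (hout : ∀ s t : V2, ∃ e, ¬ Ker D e ∧ (gv g d0 e).rep ∉ Submodule.span K2 {s, t} ∧
    (gv g d0 e).rep ∉ Submodule.span K2 {α} ∧ (gv g d0 e).rep ∉ Submodule.span K2 {β})

include hmor ha hα hb hba hβ hout

omit hout in
theorem beta_ne : β ≠ 0 := by
  rw [hβ]; exact chartF_ne hmor ha hα hb hba

omit hout in
theorem gvb_eq : gv g d0 b = Projectivization.mk K2 β (beta_ne hmor ha hα hb hba hβ) :=
  (chartF_rep hmor ha hα hb hba).trans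
    (mk_eq_mk_of_eq (chartF_ne hmor ha hα hb hba) hβ.symm)

omit hb hba hβ hout in
theorem gamma_notMem (W : Submodule K2 V2) {e : V1} (he : ¬ Ker D e)
    (hea : gv g d0 e ≠ gv g d0 a) (h : (gv g d0 e).rep ∉ W) :
    chartF g d0 a α e ∉ W := by
  intro hm
  obtain ⟨c, hc0, hc⟩ := rep_of_mk (chartF_rep hmor ha hα he hea)
  exact h (hc ▸ Submodule.smul_mem _ c hm)

theorem hout_spec (s t : V2) :
    ∃ e, ¬ Ker D e ∧ gv g d0 e ≠ gv g d0 a ∧ gv g d0 e ≠ gv g d0 b ∧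
      (gv g d0 e).rep ∉ Submodule.span K2 {s, t} := by
  have hβ0 : β ≠ 0 := beta_ne hmor ha hα hb hba hβ
  have hgb := gvb_eq hmor ha hα hb hba hβ
  obtain ⟨e, he, h1, h2, h3⟩ := hout s t
  refine ⟨e, he, ?_, ?_, h1⟩
  · intro h
    obtain ⟨c, hc0, hc⟩ := rep_of_mk (h.trans hα)
    exact h2 (hc ▸ Submodule.mem_span_singleton.2 ⟨c, rfl⟩)
  · intro h
    obtain ⟨c, hc0, hc⟩ := rep_of_mk (h.trans hgb)
    exact h3 (hc ▸ Submodule.mem_span_singleton.2 ⟨c, rfl⟩)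

omit hb hba hβ hout in
theorem fullF_ker {x : V1} (hk : Ker D x) : fullF D g d0 a α b β x = 0 := by
  rw [fullF, if_neg (fun h => h.1 hk), if_neg (fun h => h.1 hk)]

omit hmor ha hα hb hba hβ hout in
theorem fullF_chart_a {x : V1} (hx : ¬ Ker D x) (hxa : gv g d0 x ≠ gv g d0 a) :
    fullF D g d0 a α b β x = chartF g d0 a α x := by
  rw [fullF, if_pos ⟨hx, hxa⟩]

theorem fullF_chart_b {x : V1} (hx : ¬ Ker D x) (hxb : gv g d0 x ≠ gv g d0 b) :
    fullF D g d0 a α b β x = chartF g d0 b β x := by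
  have hβ0 : β ≠ 0 := beta_ne hmor ha hα hb hba hβ
  have hgb := gvb_eq hmor ha hα hb hba hβ
  by_cases hxa : gv g d0 x ≠ gv g d0 a
  · rw [fullF, if_pos ⟨hx, hxa⟩]
    exact (compat_full hmor ha hα hb hba hβ hgb
      (fun s t => by
        obtain ⟨e, he, h1, _, _⟩ := hout s t
        exact ⟨e, he, h1⟩) hx hxa hxb).symm
  · rw [fullF, if_neg (fun h => hxa h.2), if_pos ⟨hx, hxb⟩]

theorem fullF_spec {x : V1} (hx : ¬ Ker D x) :
    ∃ h : fullF D g d0 a α b β x ≠ 0,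
      gv g d0 x = Projectivization.mk K2 (fullF D g d0 a α b β x) h := by
  have hβ0 : β ≠ 0 := beta_ne hmor ha hα hb hba hβ
  have hgb := gvb_eq hmor ha hα hb hba hβ
  by_cases hxa : gv g d0 x ≠ gv g d0 a
  · rw [fullF_chart_a hx hxa]
    exact ⟨chartF_ne hmor ha hα hx hxa, chartF_rep hmor ha hα hx hxa⟩
  · have hxa' : gv g d0 x = gv g d0 a := not_ne_iff.1 hxa
    have hxb : gv g d0 x ≠ gv g d0 b := by rw [hxa']; exact Ne.symm hba
    rw [fullF_chart_b hmor ha hα hb hba hβ hout hx hxb]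
    exact ⟨chartF_ne hmor hb hgb hx hxb, chartF_rep hmor hb hgb hx hxb⟩

theorem fullF_a : fullF D g d0 a α b β a = α := by
  have hβ0 : β ≠ 0 := beta_ne hmor ha hα hb hba hβ
  have hgb := gvb_eq hmor ha hα hb hba hβ
  rw [fullF_chart_b hmor ha hα hb hba hβ hout ha (Ne.symm hba)]
  exact chart_base_swap hmor ha hα hb hba hβ hgb

omit hout in
theorem fullF_b : fullF D g d0 a α b β b = β := by
  rw [fullF_chart_a hb hba, ← hβ]

theorem fullF_chart_e {e : V1} (he : ¬ Ker D e) (hea : gv g d0 e ≠ gv g d0 a)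
    (heb : gv g d0 e ≠ gv g d0 b) {z : V1} (hz : ¬ Ker D z) (hze : gv g d0 z ≠ gv g d0 e) :
    fullF D g d0 a α b β z = chartF g d0 e (chartF g d0 a α e) z := by
  have hβ0 : β ≠ 0 := beta_ne hmor ha hα hb hba hβ
  have hgb := gvb_eq hmor ha hα hb hba hβ
  have hγ0 : chartF g d0 a α e ≠ 0 := chartF_ne hmor ha hα he hea
  have hre : gv g d0 e = Projectivization.mk K2 (chartF g d0 a α e) hγ0 :=
    chartF_rep hmor ha hα he hea
  have hout2 : ∀ s t : V2, ∃ e', ¬ Ker D e' ∧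
      (gv g d0 e').rep ∉ Submodule.span K2 {s, t} := fun s t => by
    obtain ⟨e', he', h1, _, _⟩ := hout s t
    exact ⟨e', he', h1⟩
  have hbe : chartF g d0 b β e = chartF g d0 a α e :=
    compat_full hmor ha hα hb hba hβ hgb hout2 he hea heb
  by_cases hza : gv g d0 z ≠ gv g d0 a
  · rw [fullF_chart_a hz hza]
    exact (compat_full hmor ha hα he hea rfl hre hout2 hz hza hze).symm
  · have hza' : gv g d0 z = gv g d0 a := not_ne_iff.1 hza
    have hzb : gv g d0 z ≠ gv g d0 b := by rw [hza']; exact Ne.symm hba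
    rw [fullF_chart_b hmor ha hα hb hba hβ hout hz hzb]
    exact (compat_full hmor hb hgb he heb hbe.symm hre hout2 hz hzb hze).symm

theorem fullF_add_ker {x y : V1} (hk : Ker D x) :
    fullF D g d0 a α b β (x + y) = fullF D g d0 a α b β y := by
  have hβ0 : β ≠ 0 := beta_ne hmor ha hα hb hba hβ
  have hgb := gvb_eq hmor ha hα hb hba hβ
  by_cases hy : Ker D y
  · rw [fullF_ker hmor ha hα (ker_add hmor hk hy), fullF_ker hmor ha hα hy]
  · by_cases hya : gv g d0 y ≠ gv g d0 a
    · obtain ⟨h1, h2, h3⟩ := chart_ker_shift (d0 := d0) hmor ha hα hk hy hya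
      rw [fullF_chart_a h1 h2, fullF_chart_a hy hya, h3]
    · have hya' : gv g d0 y = gv g d0 a := not_ne_iff.1 hya
      have hyb : gv g d0 y ≠ gv g d0 b := by rw [hya']; exact Ne.symm hba
      obtain ⟨h1, h2, h3⟩ := chart_ker_shift (d0 := d0) hmor hb hgb hk hy hyb
      rw [fullF_chart_b hmor ha hα hb hba hβ hout h1 h2,
        fullF_chart_b hmor ha hα hb hba hβ hout hy hyb, h3]

theorem fullF_add_distinct {x y : V1} (hx : ¬ Ker D x) (hy : ¬ Ker D y)
    (hxy : gv g d0 x ≠ gv g d0 y) :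
    ¬ Ker D (x + y) ∧
      fullF D g d0 a α b β (x + y) = fullF D g d0 a α b β x + fullF D g d0 a α b β y := by
  obtain ⟨hfx0, hrx⟩ := fullF_spec hmor ha hα hb hba hβ hout hx
  obtain ⟨hfy0, hry⟩ := fullF_spec hmor ha hα hb hba hβ hout hy
  set fx := fullF D g d0 a α b β x with hfx
  set fy := fullF D g d0 a α b β y with hfy
  obtain ⟨e, he, hea, heb, hrep⟩ := hout_spec hmor ha hα hb hba hβ hout fx fy
  have hγ0 : chartF g d0 a α e ≠ 0 := chartF_ne hmor ha hα he hea
  have hre : gv g d0 e = Projectivization.mk K2 (chartF g d0 a α e) hγ0 :=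
    chartF_rep hmor ha hα he hea
  set γ := chartF g d0 a α e with hγ
  have hγmem : γ ∉ Submodule.span K2 {fx, fy} :=
    gamma_notMem hmor ha hα _ he hea hrep
  have hxe : gv g d0 x ≠ gv g d0 e := by
    intro h
    obtain ⟨c, hc0, hc⟩ := rep_of_mk (h.symm.trans hrx)
    exact hrep (hc ▸ Submodule.smul_mem _ c (Submodule.subset_span (Or.inl rfl)))
  have hye : gv g d0 y ≠ gv g d0 e := by
    intro h
    obtain ⟨c, hc0, hc⟩ := rep_of_mk (h.symm.trans hry)
    exact hrep (hc ▸ Submodule.smul_mem _ c (Submodule.subset_span (Or.inr rfl)))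
  have hfex : chartF g d0 e γ x = fx :=
    (fullF_chart_e hmor ha hα hb hba hβ hout he hea heb hx hxe).symm
  have hfey : chartF g d0 e γ y = fy :=
    (fullF_chart_e hmor ha hα hb hba hβ hout he hea heb hy hye).symm
  have hind2 : Ind2 K2 fx fy := by
    refine ind2_of_ne hfx0 hfy0 ?_
    intro h
    exact hxy (hrx.trans (h.trans hry.symm))
  have hind : Ind3 K2 γ (chartF g d0 e γ x) (chartF g d0 e γ y) := by
    rw [hfex, hfey]
    exact ind3_rot (ind3_rot (ind3_of_ind2' hind2 hγmem))
  obtain ⟨h1, h2, h3⟩ := chart_add (d0 := d0) hmor he hre hx hxe hy hye hind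
  refine ⟨h1, ?_⟩
  rw [fullF_chart_e hmor ha hα hb hba hβ hout he hea heb h1 h2, h3, hfex, hfey]

theorem fullF_neg {x : V1} (hx : ¬ Ker D x) :
    fullF D g d0 a α b β (-x) = - fullF D g d0 a α b β x := by
  obtain ⟨hfx0, hrx⟩ := fullF_spec hmor ha hα hb hba hβ hout hx
  set fx := fullF D g d0 a α b β x with hfx
  obtain ⟨e, he, hea, heb, hrep⟩ := hout_spec hmor ha hα hb hba hβ hout fx fx
  obtain ⟨hfe0, hre⟩ := fullF_spec hmor ha hα hb hba hβ hout he
  set fe := fullF D g d0 a α b β e with hfe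
  have hfemem : fe ∉ Submodule.span K2 {fx} := by
    intro hm
    obtain ⟨c, hc0, hc⟩ := rep_of_mk hre
    refine hrep ?_
    rw [Set.pair_eq_singleton]
    exact hc ▸ Submodule.smul_mem _ c hm
  have hxe : gv g d0 x ≠ gv g d0 e := by
    intro h
    obtain ⟨c, hc0, hc⟩ := rep_of_mk (h.symm.trans hrx)
    exact hrep (hc ▸ Submodule.smul_mem _ c (Submodule.subset_span (Or.inl rfl)))
  obtain ⟨hk1, hd1⟩ := fullF_add_distinct hmor ha hα hb hba hβ hout hx he hxe
  obtain ⟨hs0, hrs⟩ := fullF_spec hmor ha hα hb hba hβ hout hk1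
  have hsum0 : fx + fe ≠ 0 := by rw [← hd1]; exact hs0
  have hrs' : gv g d0 (x + e) = Projectivization.mk K2 (fx + fe) hsum0 :=
    hrs.trans (mk_eq_mk_of_eq hs0 hd1)
  have hkneg : ¬ Ker D (-x) := not_ker_neg hmor hx
  have hgneg : gv g d0 (-x) = gv g d0 x := gv_neg (not_ker_nonzero hx)
  have hne2 : gv g d0 (x + e) ≠ gv g d0 (-x) := by
    rw [hgneg, hrs', hrx]
    intro h
    obtain ⟨c, hc⟩ := (Projectivization.mk_eq_mk_iff' K2 _ _ _ _).1 h
    refine hfemem (Submodule.mem_span_singleton.2 ⟨c - 1, ?_⟩)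
    rw [sub_smul, one_smul, hc]
    abel
  obtain ⟨hk2, hd2⟩ := fullF_add_distinct hmor ha hα hb hba hβ hout hk1 hkneg hne2
  have hveq : (x + e) + (-x) = e := by abel
  rw [hveq, hd1] at hd2
  have h3 : fx + fe + fullF D g d0 a α b β (-x) = fe := hd2.symm
  have h0 : fx + fullF D g d0 a α b β (-x) = 0 :=
    calc fx + fullF D g d0 a α b β (-x)
        = (fx + fe + fullF D g d0 a α b β (-x)) - fe := by abel
      _ = fe - fe := by rw [h3]
      _ = 0 := sub_self fe
  exact eq_neg_of_add_eq_zero_right h0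

theorem fullF_add_same {x y : V1} (hx : ¬ Ker D x) (hy : ¬ Ker D y)
    (hxy : gv g d0 x = gv g d0 y) :
    fullF D g d0 a α b β (x + y) = fullF D g d0 a α b β x + fullF D g d0 a α b β y := by
  obtain ⟨hfx0, hrx⟩ := fullF_spec hmor ha hα hb hba hβ hout hx
  obtain ⟨hfy0, hry⟩ := fullF_spec hmor ha hα hb hba hβ hout hy
  set fx := fullF D g d0 a α b β x with hfx
  set fy := fullF D g d0 a α b β y with hfy
  obtain ⟨c, hc⟩ := (Projectivization.mk_eq_mk_iff' K2 _ _ hfy0 hfx0).1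
    (hry.symm.trans (hxy.symm.trans hrx))
  have hc0 : c ≠ 0 := fun h0 => hfy0 (by rw [← hc, h0, zero_smul])
  obtain ⟨e, he, hea, heb, hrep⟩ := hout_spec hmor ha hα hb hba hβ hout fx fx
  obtain ⟨hfe0, hre⟩ := fullF_spec hmor ha hα hb hba hβ hout he
  set fe := fullF D g d0 a α b β e with hfe
  have hfemem : fe ∉ Submodule.span K2 {fx} := by
    intro hm
    obtain ⟨c2, hc20, hc2⟩ := rep_of_mk hre
    refine hrep ?_
    rw [Set.pair_eq_singleton]
    exact hc2 ▸ Submodule.smul_mem _ c2 hm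
  have hxe : gv g d0 x ≠ gv g d0 e := by
    intro h
    obtain ⟨c2, hc20, hc2⟩ := rep_of_mk (h.symm.trans hrx)
    exact hrep (hc2 ▸ Submodule.smul_mem _ c2 (Submodule.subset_span (Or.inl rfl)))
  have hye : gv g d0 y ≠ gv g d0 e := by rw [← hxy]; exact hxe
  obtain ⟨hk1, hd1⟩ := fullF_add_distinct hmor ha hα hb hba hβ hout hx he hxe
  obtain ⟨hs0, hrs⟩ := fullF_spec hmor ha hα hb hba hβ hout hk1
  have hsum0 : fx + fe ≠ 0 := by rw [← hd1]; exact hs0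
  have hrs' : gv g d0 (x + e) = Projectivization.mk K2 (fx + fe) hsum0 :=
    hrs.trans (mk_eq_mk_of_eq hs0 hd1)
  have hwy : gv g d0 (x + e) ≠ gv g d0 y := by
    rw [hrs', hry]
    intro h
    obtain ⟨c3, hc3⟩ := (Projectivization.mk_eq_mk_iff' K2 _ _ _ _).1 h
    refine hfemem (Submodule.mem_span_singleton.2 ⟨c3 * c - 1, ?_⟩)
    rw [sub_smul, one_smul, ← smul_smul, hc, hc3]
    abel
  obtain ⟨hk2, hd2⟩ := fullF_add_distinct hmor ha hα hb hba hβ hout hk1 hy hwy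
  rw [hd1] at hd2
  obtain ⟨ht0, hrt⟩ := fullF_spec hmor ha hα hb hba hβ hout hk2
  have htsum0 : (fx + fe) + fy ≠ 0 := by rw [← hd2]; exact ht0
  have hrt' : gv g d0 ((x + e) + y) = Projectivization.mk K2 ((fx + fe) + fy) htsum0 :=
    hrt.trans (mk_eq_mk_of_eq ht0 hd2)
  have hkneg : ¬ Ker D (-e) := not_ker_neg hmor he
  have hgneg : gv g d0 (-e) = gv g d0 e := gv_neg (not_ker_nonzero he)
  by_cases hsum : fx + fy = 0
  · -- then x + y is in the kernel
    have hkxy : Ker D (x + y) := by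
      by_contra hkxy
      have hvv : (fx + fe) + fy = fe := by
        rw [show (fx + fe) + fy = fe + (fx + fy) from by abel, hsum, add_zero]
      -- rep of gv (x+y) lies in span fx and span fe
      have col1 := collinear (d0 := d0) hmor hx hy hkxy
        (Submodule.mem_span_pair.2 ⟨1, 1, by rw [one_smul, one_smul]⟩)
      obtain ⟨c3, hc30, hc3⟩ := rep_of_mk hrx
      obtain ⟨c4, hc40, hc4⟩ := rep_of_mk hry
      have mem1 : (gv g d0 (x + y)).rep ∈ Submodule.span K2 {fx} := by
        refine span_pair_le ?_ ?_ col1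
        · exact Submodule.mem_span_singleton.2 ⟨c3, hc3.symm⟩
        · exact Submodule.mem_span_singleton.2 ⟨c4 * c, by rw [← smul_smul, hc, ← hc4]⟩
      have hveq2 : x + y ∈ Submodule.span K1 {(x + e) + y, -e} :=
        Submodule.mem_span_pair.2 ⟨1, 1, by rw [one_smul, one_smul]; abel⟩
      have col2 := collinear (d0 := d0) hmor hk2 hkneg hkxy hveq2
      have hgt : gv g d0 ((x + e) + y) = Projectivization.mk K2 fe hfe0 :=
        hrt'.trans (mk_eq_mk_of_eq htsum0 hvv)
      obtain ⟨c5, hc50, hc5⟩ := rep_of_mk hgt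
      obtain ⟨c6, hc60, hc6⟩ := rep_of_mk (hgneg.trans hre)
      have mem2 : (gv g d0 (x + y)).rep ∈ Submodule.span K2 {fe} := by
        refine span_pair_le ?_ ?_ col2
        · exact Submodule.mem_span_singleton.2 ⟨c5, hc5.symm⟩
        · exact Submodule.mem_span_singleton.2 ⟨c6, hc6.symm⟩
      obtain ⟨c7, hc7⟩ := Submodule.mem_span_singleton.1 mem1
      obtain ⟨c8, hc8⟩ := Submodule.mem_span_singleton.1 mem2
      have hr0 : (gv g d0 (x + y)).rep ≠ 0 := Projectivization.rep_nonzero _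
      have hc80 : c8 ≠ 0 := fun h0 => hr0 (by rw [← hc8, h0, zero_smul])
      refine hfemem (Submodule.mem_span_singleton.2 ⟨c8⁻¹ * c7, ?_⟩)
      rw [← smul_smul, hc7, ← hc8, smul_smul, inv_mul_cancel₀ hc80, one_smul]
    rw [fullF_ker hmor ha hα hkxy, hsum]
  · -- fx + fy ≠ 0
    have hvv2 : gv g d0 ((x + e) + y) ≠ gv g d0 (-e) := by
      rw [hgneg, hrt', hre]
      intro h
      obtain ⟨c9, hc9⟩ := (Projectivization.mk_eq_mk_iff' K2 _ _ _ _).1 h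
      have hsum2 : fx + fy = (c9 - 1) • fe := by
        rw [sub_smul, one_smul, hc9]; abel
      by_cases hc91 : c9 - 1 = 0
      · rw [hc91, zero_smul] at hsum2
        exact hsum hsum2
      · refine hfemem (Submodule.mem_span_singleton.2 ⟨(c9 - 1)⁻¹ * (1 + c), ?_⟩)
        rw [← smul_smul]
        have : (1 + c) • fx = fx + fy := by rw [add_smul, one_smul, hc]
        rw [this, hsum2, smul_smul, inv_mul_cancel₀ hc91, one_smul]
    obtain ⟨hk3, hd3⟩ := fullF_add_distinct hmor ha hα hb hba hβ hout hk2 hkneg hvv2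
    have hveq3 : ((x + e) + y) + (-e) = x + y := by abel
    rw [hveq3] at hd3
    rw [hd3, hd2, fullF_neg hmor ha hα hb hba hβ hout he, ← hfe]
    abel

theorem fullF_additive (x y : V1) :
    fullF D g d0 a α b β (x + y) = fullF D g d0 a α b β x + fullF D g d0 a α b β y := by
  by_cases hx : Ker D x
  · rw [fullF_add_ker hmor ha hα hb hba hβ hout hx, fullF_ker hmor ha hα hx, zero_add]
  · by_cases hy : Ker D y
    · rw [add_comm x y, fullF_add_ker hmor ha hα hb hba hβ hout hy,
        fullF_ker hmor ha hα hy, add_zero]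
    · by_cases hxy : gv g d0 x = gv g d0 y
      · exact fullF_add_same hmor ha hα hb hba hβ hout hx hy hxy
      · exact (fullF_add_distinct hmor ha hα hb hba hβ hout hx hy hxy).2

theorem exists_mu (c : K1) (x : V1) :
    ∃ μ : K2, fullF D g d0 a α b β (c • x) = μ • fullF D g d0 a α b β x := by
  by_cases hx : Ker D x
  · exact ⟨0, by rw [fullF_ker hmor ha hα (ker_smul hmor c hx), zero_smul]⟩
  · by_cases hc : c = 0
    · subst hc
      exact ⟨0, by rw [zero_smul, fullF_ker hmor ha hα ker_zero, zero_smul]⟩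
    · have hk : ¬ Ker D (c • x) := not_ker_smul hmor hx hc
      obtain ⟨h1, hr1⟩ := fullF_spec hmor ha hα hb hba hβ hout hk
      obtain ⟨h2, hr2⟩ := fullF_spec hmor ha hα hb hba hβ hout hx
      have hg : gv g d0 (c • x) = gv g d0 x := gv_smul (not_ker_nonzero hx) hc
      obtain ⟨μ, hμ⟩ := (Projectivization.mk_eq_mk_iff' K2 _ _ h1 h2).1
        (hr1.symm.trans (hg.trans hr2))
      exact ⟨μ, hμ.symm⟩

theorem pair_mu {c : K1} {u v : V1} (hu : ¬ Ker D u) (hv : ¬ Ker D v)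
    (huv : gv g d0 u ≠ gv g d0 v) {μ ν : K2}
    (hμ : fullF D g d0 a α b β (c • u) = μ • fullF D g d0 a α b β u)
    (hν : fullF D g d0 a α b β (c • v) = ν • fullF D g d0 a α b β v) : μ = ν := by
  obtain ⟨hfu0, hru⟩ := fullF_spec hmor ha hα hb hba hβ hout hu
  obtain ⟨hfv0, hrv⟩ := fullF_spec hmor ha hα hb hba hβ hout hv
  obtain ⟨hkuv, hsum⟩ := fullF_add_distinct hmor ha hα hb hba hβ hout hu hv huv
  obtain ⟨κ, hκ⟩ := exists_mu hmor ha hα hb hba hβ hout c (u + v)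
  have hind : Ind2 K2 (fullF D g d0 a α b β u) (fullF D g d0 a α b β v) := by
    refine ind2_of_ne hfu0 hfv0 ?_
    intro h
    exact huv (hru.trans (h.trans hrv.symm))
  have hsmul : c • (u + v) = c • u + c • v := smul_add c u v
  have hcomb : μ • fullF D g d0 a α b β u + ν • fullF D g d0 a α b β v =
      κ • fullF D g d0 a α b β u + κ • fullF D g d0 a α b β v := by
    rw [← hμ, ← hν, ← fullF_additive hmor ha hα hb hba hβ hout, ← hsmul, hκ, hsum, smul_add]
  have h0 : (μ - κ) • fullF D g d0 a α b β u + (ν - κ) • fullF D g d0 a α b β v = 0 := by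
    have hsplit : (μ - κ) • fullF D g d0 a α b β u + (ν - κ) • fullF D g d0 a α b β v =
        (μ • fullF D g d0 a α b β u + ν • fullF D g d0 a α b β v) -
          (κ • fullF D g d0 a α b β u + κ • fullF D g d0 a α b β v) := by
      rw [sub_smul, sub_smul]; abel
    rw [hsplit, hcomb, sub_self]
  obtain ⟨e1, e2⟩ := hind _ _ h0
  rw [sub_eq_zero] at e1 e2
  exact e1.trans e2.symm

open scoped Classical in
noncomputable def sigmaF (D : Set (Projectivization K1 V1))
    (g : Projectivization K1 V1 → Projectivization K2 V2) (d0 : Projectivization K2 V2)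
    (a : V1) (α : V2) (b : V1) (β : V2) (c : K1) : K2 :=
  if h : ∃ μ : K2, fullF D g d0 a α b β (c • a) = μ • α then h.choose else 0

theorem sigmaF_spec (c : K1) :
    fullF D g d0 a α b β (c • a) = sigmaF D g d0 a α b β c • α := by
  have hex : ∃ μ : K2, fullF D g d0 a α b β (c • a) = μ • α := by
    obtain ⟨μ, hμ⟩ := exists_mu hmor ha hα hb hba hβ hout c a
    rw [fullF_a hmor ha hα hb hba hβ hout] at hμ
    exact ⟨μ, hμ⟩
  rw [sigmaF, dif_pos hex]
  exact hex.choose_spec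

theorem sigmaF_cancel {μ : K2} {c : K1}
    (h : fullF D g d0 a α b β (c • a) = μ • α) : μ = sigmaF D g d0 a α b β c :=
  smul_right_cancel (h.symm.trans (sigmaF_spec hmor ha hα hb hba hβ hout c)) hα0

theorem sigmaF_zero : sigmaF D g d0 a α b β (0 : K1) = 0 := by
  refine (sigmaF_cancel hmor ha hα hb hba hβ hout ?_).symm
  rw [zero_smul, zero_smul, fullF_ker hmor ha hα ker_zero]

theorem sigmaF_smul (c : K1) (x : V1) :
    fullF D g d0 a α b β (c • x) = sigmaF D g d0 a α b β c • fullF D g d0 a α b β x := by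
  by_cases hx : Ker D x
  · rw [fullF_ker hmor ha hα (ker_smul hmor c hx), fullF_ker hmor ha hα hx, smul_zero]
  · by_cases hc : c = 0
    · subst hc
      rw [zero_smul, fullF_ker hmor ha hα ker_zero, sigmaF_zero hmor ha hα hb hba hβ hout,
        zero_smul]
    · obtain ⟨μ, hμ⟩ := exists_mu hmor ha hα hb hba hβ hout c x
      have hσa : fullF D g d0 a α b β (c • a) =
          sigmaF D g d0 a α b β c • fullF D g d0 a α b β a := by
        rw [fullF_a hmor ha hα hb hba hβ hout]
        exact sigmaF_spec hmor ha hα hb hba hβ hout c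
      by_cases hxa : gv g d0 x ≠ gv g d0 a
      · rw [hμ, pair_mu hmor ha hα hb hba hβ hout hx ha hxa hμ hσa]
      · have hxa' : gv g d0 x = gv g d0 a := not_ne_iff.1 hxa
        have hxb : gv g d0 x ≠ gv g d0 b := by rw [hxa']; exact Ne.symm hba
        obtain ⟨ν, hν⟩ := exists_mu hmor ha hα hb hba hβ hout c b
        have h1 : μ = ν := pair_mu hmor ha hα hb hba hβ hout hx hb hxb hμ hν
        have h2 : ν = sigmaF D g d0 a α b β c :=
          pair_mu hmor ha hα hb hba hβ hout hb ha hba hν hσa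
        rw [hμ, h1, h2]

theorem sigmaF_ne {c : K1} (hc : c ≠ 0) : sigmaF D g d0 a α b β c ≠ 0 := by
  intro h0
  have hk : ¬ Ker D (c • a) := not_ker_smul hmor ha hc
  obtain ⟨h1, _⟩ := fullF_spec hmor ha hα hb hba hβ hout hk
  exact h1 (by rw [sigmaF_spec hmor ha hα hb hba hβ hout c, h0, zero_smul])

theorem sigmaF_one : sigmaF D g d0 a α b β (1 : K1) = 1 := by
  refine (sigmaF_cancel hmor ha hα hb hba hβ hout ?_).symm
  rw [one_smul, one_smul]
  exact fullF_a hmor ha hα hb hba hβ hout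

theorem sigmaF_add (c d : K1) : sigmaF D g d0 a α b β (c + d) =
    sigmaF D g d0 a α b β c + sigmaF D g d0 a α b β d := by
  refine (sigmaF_cancel hmor ha hα hb hba hβ hout ?_).symm
  rw [add_smul, fullF_additive hmor ha hα hb hba hβ hout,
    sigmaF_spec hmor ha hα hb hba hβ hout c, sigmaF_spec hmor ha hα hb hba hβ hout d,
    add_smul]

theorem sigmaF_mul (c d : K1) : sigmaF D g d0 a α b β (c * d) =
    sigmaF D g d0 a α b β c * sigmaF D g d0 a α b β d := by
  refine (sigmaF_cancel hmor ha hα hb hba hβ hout ?_).symm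
  rw [mul_smul, sigmaF_smul hmor ha hα hb hba hβ hout c,
    sigmaF_spec hmor ha hα hb hba hβ hout d, smul_smul]

end Full

section Exists

variable (hmor : ∀ T : Set (Projectivization K2 V2), ProjSubspace K2 T →
      ProjSubspace K1 (Dᶜ ∪ {p ∈ D | g p ∈ T}))

theorem not_ker_rep {p : Projectivization K1 V1} (hp : p ∈ D) : ¬ Ker D p.rep := by
  intro h
  have h2 := h p.rep_nonzero
  rw [p.mk_rep] at h2
  exact h2 hp

theorem gv_rep (p : Projectivization K1 V1) : gv g d0 p.rep = g p := by
  rw [gv_eq p.rep_nonzero, p.mk_rep]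

include hmor

theorem sum_point {x1 x2 : V1} (h1 : ¬ Ker D x1) (h2 : ¬ Ker D x2)
    {μ1 μ2 : V2} {hμ10 : μ1 ≠ 0} {hμ20 : μ2 ≠ 0}
    (hg1 : gv g d0 x1 = Projectivization.mk K2 μ1 hμ10)
    (hg2 : gv g d0 x2 = Projectivization.mk K2 μ2 hμ20)
    (hind : Ind2 K2 μ1 μ2) :
    ∃ s1 t1 : K2, s1 ≠ 0 ∧ t1 ≠ 0 ∧ ¬ Ker D (x1 + x2) ∧
      (gv g d0 (x1 + x2)).rep = s1 • μ1 + t1 • μ2 := by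
  have hne : gv g d0 x1 ≠ gv g d0 x2 := by
    rw [hg1, hg2]
    exact ne_of_ind2 hind hμ10 hμ20
  obtain ⟨hk, hn1, hn2⟩ := trio (d0 := d0) hmor h1 h2 hne
  have hcol := collinear (d0 := d0) hmor h1 h2 hk
    (Submodule.mem_span_pair.2 ⟨1, 1, by rw [one_smul, one_smul]⟩)
  obtain ⟨c1, hc10, hc1⟩ := rep_of_mk hg1
  obtain ⟨c2, hc20, hc2⟩ := rep_of_mk hg2
  rw [hc1, hc2] at hcol
  obtain ⟨s, t, hst⟩ := Submodule.mem_span_pair.1 hcol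
  rw [smul_smul, smul_smul] at hst
  have hr0 : (gv g d0 (x1 + x2)).rep ≠ 0 := Projectivization.rep_nonzero _
  have hmk : gv g d0 (x1 + x2) =
      Projectivization.mk K2 (gv g d0 (x1 + x2)).rep hr0 := (Projectivization.mk_rep _).symm
  have hs0 : s * c1 ≠ 0 := by
    intro h0
    rw [h0, zero_smul, zero_add] at hst
    have ht0 : t * c2 ≠ 0 := fun h0' => hr0 (by rw [← hst, h0', zero_smul])
    refine hn2 (hmk.trans ?_)
    rw [hg2]
    exact ((mk_eq_mk_of_eq hr0 hst.symm).symm).symm.trans (mk_smul_eq hμ20 ht0)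
  have ht0 : t * c2 ≠ 0 := by
    intro h0
    rw [h0, zero_smul, add_zero] at hst
    refine hn1 (hmk.trans ?_)
    rw [hg1]
    exact ((mk_eq_mk_of_eq hr0 hst.symm).symm).symm.trans (mk_smul_eq hμ10 hs0)
  exact ⟨s * c1, t * c2, hs0, ht0, hk, hst.symm⟩

theorem exists_outside_core {p q r : Projectivization K1 V1}
    (hp : p ∈ D) (hq : q ∈ D) (hr : r ∈ D)
    (hind : Ind3 K2 (g p).rep (g q).rep (g r).rep) (s t : V2) :
    ∃ e, ¬ Ker D e ∧ (gv g d0 e).rep ∉ Submodule.span K2 {s, t} ∧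
      (gv g d0 e).rep ∉ Submodule.span K2 {(g p).rep} ∧
      (gv g d0 e).rep ∉ Submodule.span K2 {(g q).rep} := by
  set u := (g p).rep with hu
  set v := (g q).rep with hv
  set w := (g r).rep with hw
  set P := Submodule.span K2 {s, t} with hP
  have hu0 : u ≠ 0 := Projectivization.rep_nonzero _
  have hv0 : v ≠ 0 := Projectivization.rep_nonzero _
  have hw0 : w ≠ 0 := Projectivization.rep_nonzero _
  have hpk : ¬ Ker D p.rep := not_ker_rep hp
  have hqk : ¬ Ker D q.rep := not_ker_rep hq
  have hrk : ¬ Ker D r.rep := not_ker_rep hr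
  have hgp : gv g d0 p.rep = Projectivization.mk K2 u hu0 := by
    rw [gv_rep]
    exact (Projectivization.mk_rep (g p)).symm
  have hgq : gv g d0 q.rep = Projectivization.mk K2 v hv0 := by
    rw [gv_rep]
    exact (Projectivization.mk_rep (g q)).symm
  have hgr : gv g d0 r.rep = Projectivization.mk K2 w hw0 := by
    rw [gv_rep]
    exact (Projectivization.mk_rep (g r)).symm
  by_cases hwP : w ∈ P
  · by_cases huP : u ∈ P
    · -- v ∉ P ; use e = q.rep + r.rep
      have hvP : v ∉ P := fun hvP => not_ind3_of_mem_span_pair huP hvP hwP hind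
      obtain ⟨s1, t1, hs1, ht1, hke, hrep⟩ := sum_point (d0 := d0) hmor hqk hrk hgq hgr
        (ind3_ind2_23 hind)
      refine ⟨q.rep + r.rep, hke, ?_, ?_, ?_⟩
      · intro hm
        rw [hrep] at hm
        have h2 : s1 • v ∈ P := by
          have h3 : s1 • v = (s1 • v + t1 • w) - t1 • w := by abel
          rw [h3]
          exact Submodule.sub_mem _ hm (Submodule.smul_mem _ _ hwP)
        have h4 := Submodule.smul_mem _ s1⁻¹ h2
        rw [smul_smul, inv_mul_cancel₀ hs1, one_smul] at h4
        exact hvP h4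
      · intro hm
        rw [hrep] at hm
        obtain ⟨c, hc⟩ := Submodule.mem_span_singleton.1 hm
        refine hs1 (hind (-c) s1 t1 ?_).2.1
        rw [neg_smul, hc]
        abel
      · intro hm
        rw [hrep] at hm
        obtain ⟨c, hc⟩ := Submodule.mem_span_singleton.1 hm
        have h5 := (hind 0 (c - s1) (-t1) ?_).2.2
        · exact ht1 (neg_eq_zero.1 h5)
        · rw [zero_smul, sub_smul, neg_smul, hc]
          abel
    · -- u ∉ P ; use e = p.rep + r.rep
      obtain ⟨s1, t1, hs1, ht1, hke, hrep⟩ := sum_point (d0 := d0) hmor hpk hrk hgp hgr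
        (ind3_ind2_13 hind)
      refine ⟨p.rep + r.rep, hke, ?_, ?_, ?_⟩
      · intro hm
        rw [hrep] at hm
        have h2 : s1 • u ∈ P := by
          have h3 : s1 • u = (s1 • u + t1 • w) - t1 • w := by abel
          rw [h3]
          exact Submodule.sub_mem _ hm (Submodule.smul_mem _ _ hwP)
        have h4 := Submodule.smul_mem _ s1⁻¹ h2
        rw [smul_smul, inv_mul_cancel₀ hs1, one_smul] at h4
        exact huP h4
      · intro hm
        rw [hrep] at hm
        obtain ⟨c, hc⟩ := Submodule.mem_span_singleton.1 hm
        have h5 := (hind (c - s1) 0 (-t1) ?_).2.2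
        · exact ht1 (neg_eq_zero.1 h5)
        · rw [zero_smul, sub_smul, neg_smul, hc]
          abel
      · intro hm
        rw [hrep] at hm
        obtain ⟨c, hc⟩ := Submodule.mem_span_singleton.1 hm
        refine hs1 (hind s1 (-c) t1 ?_).1
        rw [neg_smul, hc]
        abel
  · -- w ∉ P ; use e = r.rep
    refine ⟨r.rep, hrk, ?_, ?_, ?_⟩
    · rw [gv_rep, ← hw]
      exact hwP
    · rw [gv_rep, ← hw]
      intro hm
      obtain ⟨c, hc⟩ := Submodule.mem_span_singleton.1 hm
      have h5 := (hind c 0 (-1) ?_).2.2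
      · exact one_ne_zero (neg_eq_zero.1 h5)
      · rw [zero_smul, neg_smul, one_smul, hc]
        abel
    · rw [gv_rep, ← hw]
      intro hm
      obtain ⟨c, hc⟩ := Submodule.mem_span_singleton.1 hm
      have h5 := (hind 0 c (-1) ?_).2.2
      · exact one_ne_zero (neg_eq_zero.1 h5)
      · rw [zero_smul, neg_smul, one_smul, hc]
        abel

end Exists

end SFT

open SFT in
/-- **Second Fundamental Theorem of projective geometry.** A non-degenerate morphism of
projective geometries `g : ℙ(V1) --> ℙ(V2)` (defined on `D`, with three linearly
independent points in its image) is induced by a semilinear map `f : V1 → V2`, unique up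
to a nonzero scalar. -/
theorem second_fundamental_theorem {K1 K2 V1 V2 : Type*}
    [DivisionRing K1] [DivisionRing K2]
    [AddCommGroup V1] [Module K1 V1] [AddCommGroup V2] [Module K2 V2]
    (D : Set (Projectivization K1 V1))
    (g : Projectivization K1 V1 → Projectivization K2 V2)
    (hmor : ∀ T : Set (Projectivization K2 V2), ProjSubspace K2 T →
      ProjSubspace K1 (Dᶜ ∪ {p ∈ D | g p ∈ T}))
    (hnondeg : ∃ p ∈ D, ∃ q ∈ D, ∃ r ∈ D,
      LinearIndependent K2 ![(g p).rep, (g q).rep, (g r).rep]) :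
    ∃ (σ : K1 →+* K2) (f : V1 →ₛₗ[σ] V2),
      (∀ (v : V1) (hv : v ≠ 0), Projectivization.mk K1 v hv ∈ D ↔ f v ≠ 0) ∧
      (∀ (v : V1) (hv : v ≠ 0) (hfv : f v ≠ 0),
        g (Projectivization.mk K1 v hv) = Projectivization.mk K2 (f v) hfv) ∧
      (∀ (σ' : K1 →+* K2) (f' : V1 →ₛₗ[σ'] V2),
        ((∀ (v : V1) (hv : v ≠ 0), Projectivization.mk K1 v hv ∈ D ↔ f' v ≠ 0) ∧
         (∀ (v : V1) (hv : v ≠ 0) (hf'v : f' v ≠ 0),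
           g (Projectivization.mk K1 v hv) = Projectivization.mk K2 (f' v) hf'v)) →
        ∃ μ : K2, μ ≠ 0 ∧ ∀ v : V1, f' v = μ • f v) := by
  classical
  obtain ⟨p, hp, q, hq, r, hr, hli⟩ := hnondeg
  have hind : Ind3 K2 (g p).rep (g q).rep (g r).rep := by
    intro c1 c2 c3 hc
    have h := Fintype.linearIndependent_iff.1 hli ![c1, c2, c3] ?_
    · exact ⟨h 0, h 1, h 2⟩
    · rw [Fin.sum_univ_three]
      simpa using hc
  set d0 := g p with hd0
  set a := p.rep with hadef
  have ha : ¬ Ker D a := not_ker_rep hp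
  set α := (g p).rep with hαdef
  have hα0 : α ≠ 0 := Projectivization.rep_nonzero _
  have hα : gv g d0 a = Projectivization.mk K2 α hα0 := by
    rw [hadef, gv_rep]
    exact (Projectivization.mk_rep (g p)).symm
  set b := q.rep with hbdef
  have hb : ¬ Ker D b := not_ker_rep hq
  have hv0 : (g q).rep ≠ 0 := Projectivization.rep_nonzero _
  have hgq : gv g d0 b = Projectivization.mk K2 (g q).rep hv0 := by
    rw [hbdef, gv_rep]
    exact (Projectivization.mk_rep (g q)).symm
  have hba : gv g d0 b ≠ gv g d0 a := by
    rw [hgq, hα]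
    exact ne_of_ind2 (ind2_symm (ind3_ind2_12 hind)) hv0 hα0
  set β := chartF g d0 a α b with hβ
  have hout : ∀ s t : V2, ∃ e, ¬ Ker D e ∧
      (gv g d0 e).rep ∉ Submodule.span K2 {s, t} ∧
      (gv g d0 e).rep ∉ Submodule.span K2 {α} ∧
      (gv g d0 e).rep ∉ Submodule.span K2 {β} := by
    intro s t
    obtain ⟨e, h1, h2, h3, h4⟩ := exists_outside_core (d0 := d0) hmor hp hq hr hind s t
    refine ⟨e, h1, h2, h3, ?_⟩
    have hgb := gvb_eq hmor ha hα hb hba hβ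
    obtain ⟨c, hc0, hc⟩ := rep_of_mk hgb
    have hcq : (g q).rep = c • β := by
      rw [← hc, hbdef, gv_rep]
    intro hm
    obtain ⟨c2, hc2⟩ := Submodule.mem_span_singleton.1 hm
    refine h4 (Submodule.mem_span_singleton.2 ⟨c2 * c⁻¹, ?_⟩)
    rw [← smul_smul, ← hc2]
    congr 1
    rw [hcq, smul_smul, inv_mul_cancel₀ hc0, one_smul]
  refine ⟨{ toFun := sigmaF D g d0 a α b β,
            map_one' := sigmaF_one hmor ha hα hb hba hβ hout,
            map_mul' := sigmaF_mul hmor ha hα hb hba hβ hout,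
            map_zero' := sigmaF_zero hmor ha hα hb hba hβ hout,
            map_add' := sigmaF_add hmor ha hα hb hba hβ hout },
          { toFun := fullF D g d0 a α b β,
            map_add' := fullF_additive hmor ha hα hb hba hβ hout,
            map_smul' := sigmaF_smul hmor ha hα hb hba hβ hout }, ?_, ?_, ?_⟩
  · intro v hv
    show Projectivization.mk K1 v hv ∈ D ↔ fullF D g d0 a α b β v ≠ 0
    constructor
    · intro hmem
      have hk : ¬ Ker D v := fun hk => hk hv hmem
      obtain ⟨h1, _⟩ := fullF_spec hmor ha hα hb hba hβ hout hk
      exact h1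
    · intro hf
      by_contra hmem
      exact hf (fullF_ker hmor ha hα (fun h => hmem))
  · intro v hv hfv
    have hk : ¬ Ker D v := fun hk => hfv (fullF_ker hmor ha hα hk)
    obtain ⟨h1, hrv⟩ := fullF_spec hmor ha hα hb hba hβ hout hk
    exact ((gv_eq (g := g) (d0 := d0) hv).symm.trans hrv)
  · rintro σ' f' ⟨hc1, hc2⟩
    have hrep : ∀ v, ¬ Ker D v →
        ∃ μ : K2, μ ≠ 0 ∧ f' v = μ • fullF D g d0 a α b β v := by
      intro v hkv
      have hvz : v ≠ 0 := not_ker_nonzero hkv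
      have hmem : Projectivization.mk K1 v hvz ∈ D := not_ker_mem hkv hvz
      have hf'ne : f' v ≠ 0 := (hc1 v hvz).1 hmem
      obtain ⟨h1, hrv⟩ := fullF_spec hmor ha hα hb hba hβ hout hkv
      have heq : Projectivization.mk K2 (f' v) hf'ne =
          Projectivization.mk K2 (fullF D g d0 a α b β v) h1 :=
        (hc2 v hvz hf'ne).symm.trans ((gv_eq (g := g) (d0 := d0) hvz).symm.trans hrv)
      obtain ⟨μ, hμ⟩ := (Projectivization.mk_eq_mk_iff' K2 _ _ _ _).1 heq
      exact ⟨μ, fun h0 => hf'ne (by rw [← hμ, h0, zero_smul]), hμ.symm⟩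
    have hkey : ∀ u w, ¬ Ker D u → ¬ Ker D w → gv g d0 u ≠ gv g d0 w →
        ∀ μ ν : K2, f' u = μ • fullF D g d0 a α b β u →
          f' w = ν • fullF D g d0 a α b β w → μ = ν := by
      intro u w hu hw hne μ ν hμ hν
      obtain ⟨hku, hsum⟩ := fullF_add_distinct hmor ha hα hb hba hβ hout hu hw hne
      obtain ⟨κ, hκ0, hκ⟩ := hrep (u + w) hku
      obtain ⟨hfu0, hru⟩ := fullF_spec hmor ha hα hb hba hβ hout hu
      obtain ⟨hfw0, hrw⟩ := fullF_spec hmor ha hα hb hba hβ hout hw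
      have hind2 : Ind2 K2 (fullF D g d0 a α b β u) (fullF D g d0 a α b β w) := by
        refine ind2_of_ne hfu0 hfw0 ?_
        intro h
        exact hne (hru.trans (h.trans hrw.symm))
      have hcomb : μ • fullF D g d0 a α b β u + ν • fullF D g d0 a α b β w =
          κ • fullF D g d0 a α b β u + κ • fullF D g d0 a α b β w := by
        rw [← hμ, ← hν, ← map_add f', hκ, hsum, smul_add]
      have h0 : (μ - κ) • fullF D g d0 a α b β u +
          (ν - κ) • fullF D g d0 a α b β w = 0 := by
        have hsplit : (μ - κ) • fullF D g d0 a α b β u +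
            (ν - κ) • fullF D g d0 a α b β w =
            (μ • fullF D g d0 a α b β u + ν • fullF D g d0 a α b β w) -
              (κ • fullF D g d0 a α b β u + κ • fullF D g d0 a α b β w) := by
          rw [sub_smul, sub_smul]; abel
        rw [hsplit, hcomb, sub_self]
      obtain ⟨e1, e2⟩ := hind2 _ _ h0
      rw [sub_eq_zero] at e1 e2
      exact e1.trans e2.symm
    obtain ⟨μ0, hμ00, hμ0⟩ := hrep a ha
    refine ⟨μ0, hμ00, ?_⟩
    intro v
    show f' v = μ0 • fullF D g d0 a α b β v
    by_cases hkv : Ker D v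
    · by_cases hvz : v = 0
      · subst hvz
        rw [map_zero, fullF_ker hmor ha hα ker_zero, smul_zero]
      · have hf'0 : f' v = 0 := by
          by_contra h'
          exact hkv hvz ((hc1 v hvz).2 h')
        rw [hf'0, fullF_ker hmor ha hα hkv, smul_zero]
    · obtain ⟨μ, hμne, hμ⟩ := hrep v hkv
      suffices hμeq : μ = μ0 by rw [hμ, hμeq]
      by_cases hva : gv g d0 v ≠ gv g d0 a
      · exact hkey v a hkv ha hva μ μ0 hμ hμ0
      · have hva' : gv g d0 v = gv g d0 a := not_ne_iff.1 hva
        have hvb : gv g d0 v ≠ gv g d0 b := by rw [hva']; exact Ne.symm hba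
        obtain ⟨ν, hνne, hν⟩ := hrep b hb
        exact (hkey v b hkv hb hvb μ ν hμ hν).trans (hkey b a hb ha hba ν μ0 hν hμ0)
end
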